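/- arXiv:1908.07368 — 10 statements merged into one kernel-verified Lean document; each statement's English description precedes it below -/
import Mathlib

section
/- Let R be a finite local commutative ring and let g ∈ R[X] be a monic polynomial such that the ideal ⟨g⟩ of R[X] is a primary ideal (in particular ⟨g⟩ ≠ R[X]). Then the quotient ring R[X]/⟨g⟩ is a local ring. -/
open Polynomial

section Defs

variable {R : Type*}

/-- An idempotent `e` of a commutative ring is *primitive* if it is nonzero and cannot be
written as a sum of two nonzero orthogonal idempotents. -/
def IsPrimitiveIdem [CommRing R] (e : R) : Prop :=
  IsIdempotentElem e ∧ e ≠ 0 ∧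
    ∀ u v : R, IsIdempotentElem u → IsIdempotentElem v → u * v = 0 → e = u + v →
      u = 0 ∨ v = 0

/-- A family of idempotents forming a complete set of pairwise orthogonal idempotents. -/
def IsCompleteOrthoIdem [CommRing R] {r : ℕ} (e : Fin r → R) : Prop :=
  (∀ i, IsIdempotentElem (e i)) ∧ (∑ i, e i) = 1 ∧
    ∀ i j, i ≠ j → e i * e j = 0

/-- A complete set of pairwise orthogonal primitive idempotents. -/
def IsCompletePrimIdem [CommRing R] {r : ℕ} (e : Fin r → R) : Prop :=
  IsCompleteOrthoIdem e ∧ ∀ i, IsPrimitiveIdem (e i)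

/-- The `lam`-constacyclic shift `(a_0, …, a_(n-1)) ↦ (lam·a_(n-1), a_0, …, a_(n-2))`. -/
def ctShift [CommRing R] {n : ℕ} [NeZero n] (lam : R) (a : Fin n → R) : Fin n → R :=
  fun i => if i = 0 then lam * a (i - 1) else a (i - 1)

/-- The dual code of a linear code of length `n` over `R`. -/
def dualCode [CommRing R] {n : ℕ} (Ccode : Submodule R (Fin n → R)) :
    Submodule R (Fin n → R) where
  carrier := {a | ∀ b ∈ Ccode, ∑ i, a i * b i = 0}
  add_mem' := by
    intro a a' ha ha' b hb
    simpa [add_mul, Finset.sum_add_distrib] using by rw [ha b hb, ha' b hb, add_zero]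
  zero_mem' := by intro b hb; simp
  smul_mem' := by
    intro c a ha b hb
    simpa [Finset.mul_sum, mul_assoc] using by rw [← Finset.mul_sum, ha b hb, mul_zero]

/-- The linear map `(a_0, …, a_(n-1)) ↦ a_0 + a_1 x + ⋯ + a_(n-1) x^(n-1)` from `R^n` to
`R[X]/⟨g⟩`. -/
noncomputable def polyLin [CommRing R] (n : ℕ) (g : R[X]) :
    (Fin n → R) →ₗ[R] (R[X] ⧸ Ideal.span {g}) where
  toFun a := Ideal.Quotient.mk _ (∑ i, C (a i) * X ^ (i : ℕ))
  map_add' a b := by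
    simp only [Pi.add_apply, map_add, add_mul, Finset.sum_add_distrib]
  map_smul' c a := by
    simp only [Pi.smul_apply, smul_eq_mul, RingHom.id_apply]
    have h : (∑ i : Fin n, C (c * a i) * X ^ (i : ℕ))
        = c • ∑ i : Fin n, C (a i) * X ^ (i : ℕ) := by
      rw [Finset.smul_sum]
      exact Finset.sum_congr rfl fun i _ => by
        rw [Polynomial.smul_eq_C_mul, ← mul_assoc, ← C_mul]
    rw [h]
    exact (Submodule.Quotient.mk_smul (Ideal.span {g}) c
      (∑ i : Fin n, C (a i) * X ^ (i : ℕ))).symm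

/-- The linear code of length `n` corresponding to an ideal of `R[X]/⟨g⟩` under the usual
identification. -/
noncomputable def idealCode [CommRing R] (n : ℕ) (g : R[X])
    (I : Ideal (R[X] ⧸ Ideal.span {g})) : Submodule R (Fin n → R) :=
  (Submodule.restrictScalars R (I : Submodule (R[X] ⧸ Ideal.span {g}) (R[X] ⧸ Ideal.span {g}))).comap
    (polyLin n g)

/-- The reciprocal `f* = a_0 x^(n-1) + a_1 x^(n-2) + ⋯ + a_(n-1)` of an element
`f = a_0 + a_1 x + ⋯ + a_(n-1) x^(n-1)` of `R[X]/⟨g⟩`, viewed in `R[X]/⟨h⟩`; the canonical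
representative of degree `< n` is obtained by reduction `%ₘ g` of any representative. -/
noncomputable def recip [CommRing R] (n : ℕ) (g h : R[X]) (f : R[X] ⧸ Ideal.span {g}) :
    R[X] ⧸ Ideal.span {h} :=
  Ideal.Quotient.mk _ (((Ideal.Quotient.mk_surjective f).choose %ₘ g).reflect (n - 1))

/-- The code `c·R^n = {(c·b_0, …, c·b_(n-1)) : b ∈ R^n}`. -/
def scalarCode [CommRing R] (n : ℕ) (c : R) : Submodule R (Fin n → R) where
  carrier := {a | ∀ i, ∃ b, a i = c * b}
  add_mem' := by
    intro a a' ha ha' i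
    obtain ⟨b, hb⟩ := ha i; obtain ⟨b', hb'⟩ := ha' i
    exact ⟨b + b', by simp [hb, hb', mul_add]⟩
  zero_mem' := fun i => ⟨0, by simp⟩
  smul_mem' := by
    intro r a ha i
    obtain ⟨b, hb⟩ := ha i
    exact ⟨r * b, by simp [hb]; ring⟩

end Defs

/-! Since `g` is monic, `R[X]/⟨g⟩` is finite, hence zero-dimensional, so each prime ideal is maximal.
Since `⟨g⟩` is primary, the nilradical of the quotient is prime; lying below every prime, it is
then the unique maximal ideal. -/

theorem Ideal.IsPrimary.isPrime_nilradical_quotient {A : Type*} [CommRing A] {I : Ideal A}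
    (hI : I.IsPrimary) : (nilradical (A ⧸ I)).IsPrime := by
  have hnil : nilradical (A ⧸ I) = I.radical.map (Ideal.Quotient.mk I) := by
    rw [Ideal.map_radical_of_surjective Ideal.Quotient.mk_surjective Ideal.mk_ker.le,
      Ideal.map_quotient_self]
    rfl
  have := Ideal.isPrime_radical hI
  rw [hnil]
  exact Ideal.map_isPrime_of_surjective Ideal.Quotient.mk_surjective
    (Ideal.mk_ker.le.trans Ideal.le_radical)

theorem IsLocalRing.of_isPrime_nilradical (A : Type*) [CommRing A] [Ring.KrullDimLE 0 A]
    [(nilradical A).IsPrime] : IsLocalRing A :=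
  have := Ideal.isMaximal_of_isPrime (nilradical A)
  IsLocalRing.of_isMaximal_nilradical A

theorem Polynomial.Monic.finite_quotient_span {R : Type*} [CommRing R] [Finite R] {g : R[X]}
    (hg : g.Monic) : Finite (R[X] ⧸ Ideal.span {g}) :=
  have : Module.Finite R (AdjoinRoot g) := (AdjoinRoot.powerBasis' hg).finite
  Module.finite_of_finite R (M := AdjoinRoot g)

theorem isLocalRing_quotient_of_primary_general {R : Type*} [CommRing R] [Finite R]
    (g : Polynomial R) (hg : g.Monic) (hprimary : (Ideal.span {g}).IsPrimary) :
    IsLocalRing (Polynomial R ⧸ Ideal.span {g}) :=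
  have := hg.finite_quotient_span
  have := hprimary.isPrime_nilradical_quotient
  IsLocalRing.of_isPrime_nilradical _

/-- If `R` is a finite local commutative ring and `g` is a monic polynomial generating a
primary ideal of `R[X]`, then `R[X]/⟨g⟩` is a local ring. -/
theorem isLocalRing_quotient_of_primary {R : Type*} [CommRing R] [Finite R] [IsLocalRing R]
    (g : Polynomial R) (hg : g.Monic) (hprimary : (Ideal.span {g}).IsPrimary) :
    IsLocalRing (Polynomial R ⧸ Ideal.span {g}) :=
  isLocalRing_quotient_of_primary_general g hg hprimary
end

section
/- Let R be a finite local commutative ring, r ≥ 1, and let g_1, …, g_r ∈ R[X] be monic primary pairwise coprime polynomials with product g = g_1⋯g_r. Let x denote the class of X in A = R[X]/⟨g⟩ and set ĝ_i = g/g_i. Then there exist polynomials v_1, …, v_r ∈ R[X] such that the elements e_i := v_i(x)·ĝ_i(x) form a complete set of pairwise orthogonal primitive idempotents of A; moreover {e_1, …, e_r} is the unique complete set of pairwise orthogonal primitive idempotents of A. -/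
open Polynomial

section AuxLemmas

variable {A : Type*} [CommRing A]

/-- A finite sum of pairwise orthogonal idempotents is idempotent. -/
lemma sum_ortho_isIdempotent {n : ℕ} (c : Fin n → A) (t : Finset (Fin n))
    (hidem : ∀ i ∈ t, IsIdempotentElem (c i))
    (horth : ∀ i ∈ t, ∀ j ∈ t, i ≠ j → c i * c j = 0) :
    IsIdempotentElem (∑ i ∈ t, c i) := by
  unfold IsIdempotentElem
  rw [Finset.sum_mul_sum]
  refine Finset.sum_congr rfl fun i hi => ?_
  rw [Finset.sum_eq_single i (fun j hj hji => horth i hi j hj (Ne.symm hji))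
    (fun h => absurd hi h)]
  exact hidem i hi

/-- A primitive idempotent written as a sum of pairwise orthogonal idempotents equals
one of them, the others being zero. -/
lemma prim_decomp {n : ℕ} (x : A) (hx : IsPrimitiveIdem x) (c : Fin n → A)
    (t : Finset (Fin n))
    (hidem : ∀ i ∈ t, IsIdempotentElem (c i))
    (horth : ∀ i ∈ t, ∀ j ∈ t, i ≠ j → c i * c j = 0)
    (hsum : x = ∑ i ∈ t, c i) :
    ∃ i ∈ t, x = c i ∧ ∀ j ∈ t, j ≠ i → c j = 0 := by
  classical
  revert hidem horth hsum
  induction t using Finset.induction_on with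
  | empty =>
    intro hidem horth hsum
    rw [Finset.sum_empty] at hsum
    exact absurd hsum hx.2.1
  | @insert a t ha ih =>
    intro hidem horth hsum
    rw [Finset.sum_insert ha] at hsum
    have hSidem : IsIdempotentElem (∑ i ∈ t, c i) :=
      sum_ortho_isIdempotent c t (fun i hi => hidem i (Finset.mem_insert_of_mem hi))
        (fun i hi j hj hij => horth i (Finset.mem_insert_of_mem hi) j
          (Finset.mem_insert_of_mem hj) hij)
    have haS : c a * (∑ i ∈ t, c i) = 0 := by
      rw [Finset.mul_sum]
      refine Finset.sum_eq_zero fun j hj => ?_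
      exact horth a (Finset.mem_insert_self a t) j (Finset.mem_insert_of_mem hj)
        (fun h => ha (h ▸ hj))
    rcases hx.2.2 (c a) (∑ i ∈ t, c i) (hidem a (Finset.mem_insert_self a t)) hSidem
        haS hsum with h0 | h0
    · rw [h0, zero_add] at hsum
      obtain ⟨i, hi, hxi, hz⟩ := ih (fun i hi => hidem i (Finset.mem_insert_of_mem hi))
        (fun i hi j hj hij => horth i (Finset.mem_insert_of_mem hi) j
          (Finset.mem_insert_of_mem hj) hij) hsum
      refine ⟨i, Finset.mem_insert_of_mem hi, hxi, fun j hj hji => ?_⟩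
      rcases Finset.mem_insert.mp hj with rfl | hj
      · exact h0
      · exact hz j hj hji
    · refine ⟨a, Finset.mem_insert_self a t, by rw [hsum, h0, add_zero], fun j hj hja => ?_⟩
      rcases Finset.mem_insert.mp hj with rfl | hj
      · exact absurd rfl hja
      · have : c j * (∑ i ∈ t, c i) = c j := by
          rw [Finset.mul_sum]
          rw [Finset.sum_eq_single j (fun k hk hkj => horth j (Finset.mem_insert_of_mem hj)
            k (Finset.mem_insert_of_mem hk) (Ne.symm hkj)) (fun h => absurd hj h)]
          exact hidem j (Finset.mem_insert_of_mem hj)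
        rw [← this, h0, mul_zero]

/-- Two complete sets of pairwise orthogonal primitive idempotents have the same range. -/
lemma ranges_eq_of_completePrimIdem {r s : ℕ} (e : Fin r → A) (f : Fin s → A)
    (he : IsCompletePrimIdem e) (hf : IsCompletePrimIdem f) :
    Set.range f = Set.range e := by
  classical
  -- for each k, f k equals some e i
  have key : ∀ {m n : ℕ} (a : Fin m → A) (b : Fin n → A),
      IsCompletePrimIdem a → IsCompletePrimIdem b →
      ∀ k, ∃ i, b k = b k * a i ∧ ∀ j, j ≠ i → b k * a j = 0 := by
    intro m n a b ha hb k
    have hsum : b k = ∑ i, b k * a i := by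
      rw [← Finset.mul_sum, ha.1.2.1, mul_one]
    have hidem : ∀ i ∈ Finset.univ, IsIdempotentElem (b k * a i) := by
      intro i _
      unfold IsIdempotentElem
      have h1 := (hb.2 k).1
      have h2 := (ha.2 i).1
      unfold IsIdempotentElem at h1 h2
      calc b k * a i * (b k * a i) = (b k * b k) * (a i * a i) := by ring
        _ = b k * a i := by rw [h1, h2]
    have horth : ∀ i ∈ Finset.univ, ∀ j ∈ Finset.univ, i ≠ j →
        (b k * a i) * (b k * a j) = 0 := by
      intro i _ j _ hij
      calc (b k * a i) * (b k * a j) = (b k * b k) * (a i * a j) := by ring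
        _ = 0 := by rw [ha.1.2.2 i j hij, mul_zero]
    obtain ⟨i, _, h1, h2⟩ := prim_decomp (b k) (hb.2 k) (fun i => b k * a i)
      Finset.univ hidem horth hsum
    exact ⟨i, h1, fun j hj => h2 j (Finset.mem_univ j) hj⟩
  choose σ hσ hσ' using key e f he hf
  choose τ hτ hτ' using key f e hf he
  have hfe : ∀ k, f k = e (σ k) := by
    intro k
    have hne : e (σ k) * f k ≠ 0 := by
      rw [mul_comm, ← hσ k]
      exact (hf.2 k).2.1
    have hk : τ (σ k) = k := by
      by_contra h
      exact hne (hτ' (σ k) k (Ne.symm h))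
    have := hτ (σ k)
    rw [hk, mul_comm, ← hσ k] at this
    exact this.symm
  have hef : ∀ i, e i = f (τ i) := by
    intro i
    have hne : f (τ i) * e i ≠ 0 := by
      rw [mul_comm, ← hτ i]
      exact (he.2 i).2.1
    have hi : σ (τ i) = i := by
      by_contra h
      exact hne (hσ' (τ i) i (Ne.symm h))
    have := hσ (τ i)
    rw [hi, mul_comm, ← hτ i] at this
    exact this.symm
  apply Set.eq_of_subset_of_subset
  · rintro x ⟨k, rfl⟩; exact ⟨σ k, (hfe k).symm⟩
  · rintro x ⟨i, rfl⟩; exact ⟨τ i, (hef i).symm⟩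

end AuxLemmas


/-- Construction and uniqueness of the complete set of pairwise orthogonal primitive
idempotents of `R[X]/⟨g₁⋯gᵣ⟩` for monic primary pairwise coprime polynomials `gᵢ`. -/
theorem exists_complete_primitive_idempotents {R : Type*} [CommRing R] [Finite R]
    [IsLocalRing R] {r : ℕ} (hr : 1 ≤ r) (g : Fin r → Polynomial R)
    (hmonic : ∀ i, (g i).Monic)
    (hprimary : ∀ i, (Ideal.span {g i}).IsPrimary)
    (hcoprime : ∀ i j, i ≠ j → IsCoprime (g i) (g j)) :
    ∃ v : Fin r → Polynomial R,
      IsCompletePrimIdem (fun i => Ideal.Quotient.mk (Ideal.span {∏ j, g j})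
        (v i * ∏ j ∈ Finset.univ.erase i, g j)) ∧
      ∀ (s : ℕ) (f : Fin s → (Polynomial R ⧸ Ideal.span {∏ j, g j})),
        IsCompletePrimIdem f →
        Set.range f = Set.range (fun i => Ideal.Quotient.mk (Ideal.span {∏ j, g j})
          (v i * ∏ j ∈ Finset.univ.erase i, g j)) := by
  classical
  set G : R[X] := ∏ j, g j with hGdef
  have hcop : ∀ i, IsCoprime (g i) (∏ j ∈ Finset.univ.erase i, g j) := fun i =>
    IsCoprime.prod_right fun j hj => hcoprime i j (Ne.symm (Finset.mem_erase.mp hj).1)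
  choose u v huv using fun i => (hcop i)
  set e : Fin r → R[X] := fun i => v i * ∏ j ∈ Finset.univ.erase i, g j with hedef
  -- basic divisibility facts
  have hdvd_ne : ∀ i j, j ≠ i → g j ∣ e i := fun i j hji =>
    Dvd.dvd.mul_left (Finset.dvd_prod_of_mem g (Finset.mem_erase.mpr ⟨hji, Finset.mem_univ j⟩))
      (v i)
  have hdvd_self : ∀ i, g i ∣ e i - 1 := fun i =>
    ⟨-(u i), by simp only [hedef]; linear_combination huv i⟩
  have hgjG : ∀ j, g j ∣ G := fun j => Finset.dvd_prod_of_mem g (Finset.mem_univ j)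
  have hGdvd : ∀ p : R[X], (∀ j, g j ∣ p) → G ∣ p := fun p hp =>
    Finset.prod_dvd_of_coprime
      (fun i _ j _ hij => hcoprime i j hij) (fun j _ => hp j)
  have hnot1 : ∀ j, ¬ (g j ∣ (1 : R[X])) := by
    intro j h
    exact (Ideal.isPrimary_iff.mp (hprimary j)).1
      (Ideal.span_singleton_eq_top.mpr (isUnit_of_dvd_one h))
  -- each R[X]/⟨g j⟩ has only trivial idempotents
  have htri : ∀ j (p : R[X]), g j ∣ p * p - p → g j ∣ p ∨ g j ∣ p - 1 := by
    intro j p hdvd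
    have hmem : p * (p - 1) ∈ Ideal.span {g j} := by
      rw [Ideal.mem_span_singleton]
      have : p * (p - 1) = p * p - p := by ring
      rw [this]; exact hdvd
    rcases (Ideal.isPrimary_iff.mp (hprimary j)).2 hmem with h | h
    · exact Or.inl (Ideal.mem_span_singleton.mp h)
    · right
      obtain ⟨n, hn⟩ := Ideal.mem_radical_iff.mp h
      rw [Ideal.mem_span_singleton] at hn
      -- work in the quotient
      set B := R[X] ⧸ Ideal.span {g j}
      set π : R[X] →+* B := Ideal.Quotient.mk (Ideal.span {g j})
      have hnil : IsNilpotent (π (p - 1)) := by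
        refine ⟨n, ?_⟩
        rw [← map_pow, Ideal.Quotient.eq_zero_iff_mem, Ideal.mem_span_singleton]
        exact hn
      have hunit : IsUnit (π p) := by
        have : π p = 1 + π (p - 1) := by rw [← map_one π, ← map_add]; ring_nf
        rw [this]
        exact hnil.isUnit_one_add
      have hzero : π p * π (p - 1) = 0 := by
        rw [← map_mul, Ideal.Quotient.eq_zero_iff_mem, Ideal.mem_span_singleton]
        have : p * (p - 1) = p * p - p := by ring
        rw [this]; exact hdvd
      have : π (p - 1) = 0 := (hunit.mul_right_eq_zero).mp hzero
      rw [Ideal.Quotient.eq_zero_iff_mem, Ideal.mem_span_singleton] at this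
      exact this
  -- translation lemma
  have heq : ∀ p q : R[X], Ideal.Quotient.mk (Ideal.span {G}) p =
      Ideal.Quotient.mk (Ideal.span {G}) q ↔ G ∣ p - q := by
    intro p q
    rw [Ideal.Quotient.eq, Ideal.mem_span_singleton]
  set E : Fin r → (R[X] ⧸ Ideal.span {G}) :=
    fun i => Ideal.Quotient.mk (Ideal.span {G}) (e i) with hEdef
  -- idempotency
  have hEidem : ∀ i, IsIdempotentElem (E i) := by
    intro i
    unfold IsIdempotentElem
    rw [hEdef, ← map_mul, heq]
    refine hGdvd _ fun j => ?_
    rcases eq_or_ne j i with rfl | hji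
    · have : e j * e j - e j = e j * (e j - 1) := by ring
      rw [this]
      exact (hdvd_self j).mul_left (e j)
    · have : e i * e i - e i = (e i - 1) * e i + 0 := by ring
      rw [this, add_zero]
      exact (hdvd_ne i j hji).mul_left (e i - 1)
  -- sum is 1
  have hEsum : (∑ i, E i) = 1 := by
    rw [hEdef, ← map_sum, show (1 : R[X] ⧸ Ideal.span {G}) =
      Ideal.Quotient.mk (Ideal.span {G}) 1 from rfl, heq]
    refine hGdvd _ fun j => ?_
    have hsplit : (∑ i, e i) - 1 = (e j - 1) + ∑ i ∈ Finset.univ.erase j, e i := by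
      rw [← Finset.add_sum_erase _ _ (Finset.mem_univ j)]; ring
    rw [hsplit]
    exact dvd_add (hdvd_self j)
      (Finset.dvd_sum fun i hi => hdvd_ne i j (Ne.symm (Finset.mem_erase.mp hi).1))
  -- orthogonality
  have hEorth : ∀ i j, i ≠ j → E i * E j = 0 := by
    intro i j hij
    rw [hEdef, ← map_mul, show (0 : R[X] ⧸ Ideal.span {G}) =
      Ideal.Quotient.mk (Ideal.span {G}) 0 from rfl, heq, sub_zero]
    refine hGdvd _ fun k => ?_
    rcases eq_or_ne k i with rfl | hki
    · exact (hdvd_ne j k hij).mul_left (e k)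
    · exact (hdvd_ne i k hki).mul_right (e j)
  -- nonzero
  have hEne : ∀ i, E i ≠ 0 := by
    intro i h
    rw [hEdef, show (0 : R[X] ⧸ Ideal.span {G}) =
      Ideal.Quotient.mk (Ideal.span {G}) 0 from rfl, heq, sub_zero] at h
    have h1 : g i ∣ e i := (hgjG i).trans h
    have : g i ∣ (1 : R[X]) := by
      have := dvd_sub h1 (hdvd_self i)
      simpa using this
    exact hnot1 i this
  -- primitivity
  have hEprim : ∀ i, IsPrimitiveIdem (E i) := by
    intro i
    refine ⟨hEidem i, hEne i, ?_⟩
    intro a b hai hbi hab hsum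
    obtain ⟨p, rfl⟩ := Ideal.Quotient.mk_surjective a
    obtain ⟨q, rfl⟩ := Ideal.Quotient.mk_surjective b
    have hp2 : G ∣ p * p - p := by rw [← heq, map_mul]; exact hai
    have hq2 : G ∣ q * q - q := by rw [← heq, map_mul]; exact hbi
    have hpq : G ∣ p * q := by
      rw [← sub_zero (p * q), ← heq, map_mul]
      exact hab.trans (map_zero (Ideal.Quotient.mk (Ideal.span {G}))).symm
    have hepq : G ∣ e i - (p + q) := by rw [← heq, map_add]; exact hsum
    -- for j ≠ i both p and q are divisible by g j
    have hside : ∀ j, j ≠ i → g j ∣ p ∧ g j ∣ q := by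
      intro j hji
      have h1 : g j ∣ p + q := by
        have h2 : g j ∣ e i - (p + q) := (hgjG j).trans hepq
        have := dvd_sub (hdvd_ne i j hji) h2
        simpa using this
      have h3 : g j ∣ p * q := (hgjG j).trans hpq
      have h4 : g j ∣ p * p - p := (hgjG j).trans hp2
      have h5 : g j ∣ q * q - q := (hgjG j).trans hq2
      constructor
      · have hrw : p = p * (p + q) - p * q - (p * p - p) := by ring
        rw [hrw]
        exact dvd_sub (dvd_sub (h1.mul_left p) h3) h4
      · have hrw : q = q * (p + q) - p * q - (q * q - q) := by ring
        rw [hrw]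
        exact dvd_sub (dvd_sub (h1.mul_left q) h3) h5
    rcases htri i p ((hgjG i).trans hp2) with hcase | hcase
    · left
      rw [show (0 : R[X] ⧸ Ideal.span {G}) = Ideal.Quotient.mk (Ideal.span {G}) 0 from rfl,
        heq, sub_zero]
      refine hGdvd p fun j => ?_
      rcases eq_or_ne j i with rfl | hji
      · exact hcase
      · exact (hside j hji).1
    · right
      rw [show (0 : R[X] ⧸ Ideal.span {G}) = Ideal.Quotient.mk (Ideal.span {G}) 0 from rfl,
        heq, sub_zero]
      refine hGdvd q fun j => ?_
      rcases eq_or_ne j i with rfl | hji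
      · -- g i ∣ q since p + q ≡ e i ≡ 1 and p ≡ 1 mod g i
        have h2 : g j ∣ e j - (p + q) := (hgjG j).trans hepq
        have hrw : q = (e j - 1) - (e j - (p + q)) - (p - 1) := by ring
        rw [hrw]
        exact dvd_sub (dvd_sub (hdvd_self j) h2) hcase
      · exact (hside j hji).2
  have hE : IsCompletePrimIdem E := ⟨⟨hEidem, hEsum, hEorth⟩, hEprim⟩
  exact ⟨v, hE, fun s f hf => ranges_eq_of_completePrimIdem E f hE hf⟩
end

section
/- Let R be a finite local commutative ring, r ≥ 1, and let g_1, …, g_r ∈ R[X] be monic primary pairwise coprime polynomials with product g = g_1⋯g_r. Let A = R[X]/⟨g⟩, let π : R[X] → A be the quotient map, and let {e_1, …, e_r} be the complete set of pairwise orthogonal primitive idempotents of A with e_i in the ideal generated by π(g/g_i). Then for each i, the map T_i : R[X] → A, h ↦ e_i·π(h), is surjective onto the ideal e_i·A, its kernel is ⟨g_i⟩, so it induces an isomorphism R[X]/⟨g_i⟩ ≅ e_i·A; moreover A is the internal direct sum A = e_1·A ⊕ ⋯ ⊕ e_r·A of these ideals. -/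
open Polynomial

theorem aux_qids {S : Type*} [CommRing S] {r : ℕ} (g : Fin r → S) (G : S)
    (hG : G = ∏ j, g j)
    (e : Fin r → S ⧸ Ideal.span {G})
    (hidem : ∀ i, IsIdempotentElem (e i))
    (hsum : (∑ i, e i) = 1)
    (hortho : ∀ i j, i ≠ j → e i * e j = 0)
    (hmem : ∀ i, e i ∈ Ideal.span {Ideal.Quotient.mk (Ideal.span {G})
      (∏ j ∈ Finset.univ.erase i, g j)}) :
    (∀ i, ∀ y ∈ Ideal.span {e i}, ∃ h : S,
        e i * Ideal.Quotient.mk (Ideal.span {G}) h = y) ∧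
    (∀ i, ∀ h : S,
        e i * Ideal.Quotient.mk (Ideal.span {G}) h = 0 ↔ h ∈ Ideal.span {g i}) ∧
    (∀ i, ∃ φ : (S ⧸ Ideal.span {g i}) ≃ₗ[S]
        (Submodule.restrictScalars S (Ideal.span {e i} :
          Ideal (S ⧸ Ideal.span {G}))),
      ∀ h : S,
        (φ (Ideal.Quotient.mk (Ideal.span {g i}) h) : S ⧸ Ideal.span {G})
          = e i * Ideal.Quotient.mk (Ideal.span {G}) h) ∧
    DirectSum.IsInternal (fun i => (Ideal.span {e i} :
      Ideal (S ⧸ Ideal.span {G}))) := by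
  classical
  set π : S →+* S ⧸ Ideal.span {G} := Ideal.Quotient.mk (Ideal.span {G}) with hπ
  have hπG : π G = 0 := Ideal.Quotient.eq_zero_iff_mem.mpr (Ideal.mem_span_singleton_self G)
  have hei_gi : ∀ i, e i * π (g i) = 0 := by
    intro i
    obtain ⟨c, hc⟩ := Ideal.mem_span_singleton'.mp (hmem i)
    have hq : (∏ j ∈ Finset.univ.erase i, g j) * g i = G := by
      rw [hG, Finset.prod_erase_mul _ _ (Finset.mem_univ i)]
    rw [← hc, mul_assoc, ← map_mul, hq, hπG, mul_zero]
  have hker : ∀ i, ∀ h : S, e i * π h = 0 ↔ h ∈ Ideal.span {g i} := by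
    intro i h
    constructor
    · intro h0
      have hj : ∀ j, j ≠ i → e j ∈ Ideal.span {π (g i)} := by
        intro j hji
        obtain ⟨c, hc⟩ := Finset.dvd_prod_of_mem g
          (Finset.mem_erase.mpr ⟨Ne.symm hji, Finset.mem_univ i⟩)
        obtain ⟨a, ha⟩ := Ideal.mem_span_singleton'.mp (hmem j)
        rw [← ha, hc, map_mul]
        exact Ideal.mul_mem_left _ _
          (Ideal.mul_mem_right _ _ (Ideal.mem_span_singleton_self _))
      have hmemh : π h ∈ Ideal.span {π (g i)} := by
        have h1 : π h = ∑ j, e j * π h := by rw [← Finset.sum_mul, hsum, one_mul]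
        rw [h1]
        refine Ideal.sum_mem _ fun j _ => ?_
        by_cases hji : j = i
        · subst hji; rw [h0]; exact Ideal.zero_mem _
        · exact Ideal.mul_mem_right _ _ (hj j hji)
      obtain ⟨b, hb⟩ := Ideal.mem_span_singleton'.mp hmemh
      obtain ⟨c, rfl⟩ := Ideal.Quotient.mk_surjective b
      have hmem2 : h - c * g i ∈ Ideal.span {G} := by
        rw [← Ideal.Quotient.eq_zero_iff_mem]
        have : π (h - c * g i) = π h - π c * π (g i) := by simp [map_sub, map_mul]
        rw [this, ← hb, sub_self]
      have hGle : Ideal.span {G} ≤ Ideal.span {g i} :=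
        Ideal.span_singleton_le_span_singleton.mpr
          (hG ▸ Finset.dvd_prod_of_mem g (Finset.mem_univ i))
      have h1 : h - c * g i ∈ Ideal.span {g i} := hGle hmem2
      have h2 : c * g i ∈ Ideal.span {g i} :=
        Ideal.mul_mem_left _ _ (Ideal.mem_span_singleton_self _)
      simpa using Ideal.add_mem _ h1 h2
    · intro hh
      obtain ⟨c, rfl⟩ := Ideal.mem_span_singleton.mp hh
      rw [map_mul, ← mul_assoc, hei_gi, zero_mul]
  have hmemT : ∀ i, ∀ h : S, e i * π h ∈ Ideal.span {e i} := fun i h =>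
    Ideal.mem_span_singleton'.mpr ⟨π h, mul_comm _ _⟩
  refine ⟨?_, hker, ?_, ?_⟩
  · intro i y hy
    obtain ⟨a, ha⟩ := Ideal.mem_span_singleton'.mp hy
    obtain ⟨h, rfl⟩ := Ideal.Quotient.mk_surjective a
    exact ⟨h, by rw [mul_comm]; exact ha⟩
  · intro i
    let T : S →ₗ[S]
        (Submodule.restrictScalars S
          (Ideal.span {e i} : Ideal (S ⧸ Ideal.span {G}))) :=
      { toFun := fun h => ⟨e i * π h, hmemT i h⟩
        map_add' := fun a b => by ext; simp [mul_add]
        map_smul' := fun p h => by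
          ext
          simp only [SetLike.val_smul, smul_eq_mul, RingHom.id_apply, map_mul]
          show e i * (π p * π h) = π p * (e i * π h)
          ring }
    have hTker : Ideal.span {g i} ≤ LinearMap.ker T := by
      intro h hh
      rw [LinearMap.mem_ker]
      ext
      exact (hker i h).mpr hh
    let T' := Submodule.liftQ (Ideal.span {g i} : Ideal S) T hTker
    have hinj : Function.Injective T' := by
      rw [← LinearMap.ker_eq_bot]
      refine Submodule.ker_liftQ_eq_bot _ _ _ ?_
      intro h hh
      have : e i * π h = 0 := congrArg Subtype.val hh
      exact (hker i h).mp this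
    have hsurj : Function.Surjective T' := by
      intro y
      obtain ⟨a, ha⟩ := Ideal.mem_span_singleton'.mp y.2
      obtain ⟨h, rfl⟩ := Ideal.Quotient.mk_surjective a
      refine ⟨Submodule.Quotient.mk h, ?_⟩
      ext
      show e i * π h = (y : S ⧸ Ideal.span {G})
      rw [mul_comm]; exact ha
    refine ⟨LinearEquiv.ofBijective T' ⟨hinj, hsurj⟩, fun h => ?_⟩
    show (T' (Submodule.Quotient.mk h) : S ⧸ Ideal.span {G}) = e i * π h
    rw [Submodule.liftQ_apply]
    rfl
  · rw [DirectSum.isInternal_submodule_iff_iSupIndep_and_iSup_eq_top]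
    constructor
    · intro i
      rw [Submodule.disjoint_def]
      intro x hx hx'
      have hann : (⨆ j, ⨆ _ : j ≠ i, (Ideal.span {e j} :
          Ideal (S ⧸ Ideal.span {G}))) ≤
          LinearMap.ker (LinearMap.lsmul _ _ (e i)) := by
        refine iSup_le fun j => iSup_le fun hji => ?_
        rw [Ideal.span_singleton_le_iff_mem, LinearMap.mem_ker]
        show e i • e j = 0
        rw [smul_eq_mul]
        exact hortho i j (Ne.symm hji)
      have h0 : e i * x = 0 := by
        have := hann hx'
        rw [LinearMap.mem_ker] at this
        simpa using this
      obtain ⟨a, ha⟩ := Ideal.mem_span_singleton'.mp hx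
      have hx2 : x * e i = x := by rw [← ha, mul_assoc, hidem i]
      rw [← hx2, mul_comm, h0]
    · rw [eq_top_iff]
      intro x _
      have hx : x = ∑ j, x * e j := by rw [← Finset.mul_sum, hsum, mul_one]
      rw [hx]
      exact Submodule.sum_mem _ fun j _ =>
        Submodule.mem_iSup_of_mem j (Ideal.mem_span_singleton'.mpr ⟨x, rfl⟩)

/-- For monic primary pairwise coprime `gᵢ` with product `g`, the maps
`Tᵢ : h ↦ eᵢ·π(h)` are surjective onto `eᵢ·A`, have kernel `⟨gᵢ⟩`, induce isomorphisms
`R[X]/⟨gᵢ⟩ ≅ eᵢ·A`, and `A = R[X]/⟨g⟩` is the internal direct sum of the ideals `eᵢ·A`. -/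
theorem quotient_internal_direct_sum {R : Type*} [CommRing R] [Finite R] [IsLocalRing R]
    {r : ℕ} (hr : 1 ≤ r) (g : Fin r → Polynomial R)
    (hmonic : ∀ i, (g i).Monic)
    (hprimary : ∀ i, (Ideal.span {g i}).IsPrimary)
    (hcoprime : ∀ i j, i ≠ j → IsCoprime (g i) (g j))
    (e : Fin r → (Polynomial R ⧸ Ideal.span {∏ j, g j}))
    (he : IsCompletePrimIdem e)
    (hmem : ∀ i, e i ∈ Ideal.span {Ideal.Quotient.mk (Ideal.span {∏ j, g j})
      (∏ j ∈ Finset.univ.erase i, g j)}) :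
    (∀ i, ∀ y ∈ Ideal.span {e i}, ∃ h : Polynomial R,
        e i * Ideal.Quotient.mk (Ideal.span {∏ j, g j}) h = y) ∧
    (∀ i, ∀ h : Polynomial R,
        e i * Ideal.Quotient.mk (Ideal.span {∏ j, g j}) h = 0 ↔ h ∈ Ideal.span {g i}) ∧
    (∀ i, ∃ φ : (Polynomial R ⧸ Ideal.span {g i}) ≃ₗ[Polynomial R]
        (Submodule.restrictScalars (Polynomial R) (Ideal.span {e i} :
          Ideal (Polynomial R ⧸ Ideal.span {∏ j, g j}))),
      ∀ h : Polynomial R,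
        (φ (Ideal.Quotient.mk (Ideal.span {g i}) h) :
          Polynomial R ⧸ Ideal.span {∏ j, g j})
          = e i * Ideal.Quotient.mk (Ideal.span {∏ j, g j}) h) ∧
    DirectSum.IsInternal (fun i => (Ideal.span {e i} :
      Ideal (Polynomial R ⧸ Ideal.span {∏ j, g j}))) :=
  ⟨(aux_qids g (∏ j, g j) rfl e he.1.1 he.1.2.1 he.1.2.2 hmem).1,
   (aux_qids g (∏ j, g j) rfl e he.1.1 he.1.2.1 he.1.2.2 hmem).2.1,
   (aux_qids g (∏ j, g j) rfl e he.1.1 he.1.2.1 he.1.2.2 hmem).2.2.1,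
   (aux_qids g (∏ j, g j) rfl e he.1.1 he.1.2.1 he.1.2.2 hmem).2.2.2⟩
end

section
/- Let R be a finite commutative chain ring with maximal ideal ⟨γ⟩, nilpotency index t, and residue field of cardinality q. Let λ be a unit of R and n a positive integer with gcd(n, q) = 1, so that X^n − λ = f_1⋯f_r with f_i monic basic irreducible pairwise coprime, and let {e_1, …, e_r} be the complete set of primitive pairwise orthogonal idempotents of R[x] = R[X]/⟨X^n − λ⟩ with e_i in the ideal generated by the image of (X^n − λ)/f_i. Then for every ideal C of R[x] there exists a unique tuple of integers (s_1, …, s_r) with 0 ≤ s_i ≤ t such that C is the internal direct sum C = γ^{s_1}·e_1·R[x] ⊕ ⋯ ⊕ γ^{s_r}·e_r·R[x]. -/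
open Polynomial

/-!
Write `A = R[X]/(Xⁿ - λ)` and `Bᵢ = R[X]/(fᵢ)`. Since `eᵢ` is divisible by `∏_{j ≠ i} fⱼ`, the
projection `A → Bᵢ` sends `eⱼ` to `δᵢⱼ` and is injective on `eᵢA`, so an ideal `C` of `A` is
`⨆ γ^{sᵢ} eᵢ A` exactly when each projection of `C` to `Bᵢ` is generated by `γ^{sᵢ}`.
Each `Bᵢ` is a local ring whose maximal ideal `(γ)` is nilpotent of index `t`: modulo `γ` it is the
field `𝔽_q[X]/(f̄ᵢ)`. Its ideals are therefore exactly the `(γ^s)` with `0 ≤ s ≤ t`, all distinct.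
-/

open IsLocalRing

section ChainIdeals

variable {B : Type*} [CommRing B] {g : B} {t : ℕ}

theorem isUnit_of_notMem_span_of_isMaximal (hg : IsNilpotent g)
    (hmax : (Ideal.span {g}).IsMaximal) {x : B} (hx : x ∉ Ideal.span {g}) : IsUnit x := by
  obtain ⟨y, i, hi, hyx⟩ := hmax.exists_inv hx
  obtain ⟨c, rfl⟩ := Ideal.mem_span_singleton'.1 hi
  have hunit : IsUnit (y * x) := by
    rw [eq_sub_of_add_eq hyx]
    exact ((Commute.all c g).isNilpotent_mul_left hg).isUnit_one_sub
  exact isUnit_of_mul_isUnit_right hunit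

theorem exists_isUnit_mul_pow_eq (hg : g ^ t = 0)
    (hu : ∀ x ∉ Ideal.span {g}, IsUnit x) (x : B) : ∃ u m, IsUnit u ∧ x = u * g ^ m := by
  -- divide `y` by `g` while it is not a unit; at most `t` steps, as `g ^ t = 0`
  suffices h : ∀ j (y : B) k, t ≤ k + j → ∃ u m, IsUnit u ∧ y * g ^ k = u * g ^ m by
    simpa using h t x 0 (by omega)
  intro j
  induction j with
  | zero =>
    exact fun y k hk => ⟨1, t, isUnit_one, by
      rw [pow_eq_zero_of_le (by omega) hg, hg, mul_zero, mul_zero]⟩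
  | succ j ih =>
    intro y k hk
    by_cases hy : y ∈ Ideal.span {g}
    · obtain ⟨z, rfl⟩ := Ideal.mem_span_singleton'.1 hy
      simpa only [mul_assoc, ← pow_succ'] using ih z (k + 1) (by omega)
    · exact ⟨y, k, hu y hy, rfl⟩

theorem exists_eq_span_pow (hg : g ^ t = 0) (hu : ∀ x ∉ Ideal.span {g}, IsUnit x)
    (J : Ideal B) : ∃ s ≤ t, J = Ideal.span {g ^ s} := by
  classical
  have hgt : g ^ t ∈ J := by rw [hg]; exact J.zero_mem
  have hP : ∃ m, g ^ m ∈ J := ⟨t, hgt⟩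
  refine ⟨Nat.find hP, Nat.find_min' hP hgt, le_antisymm (fun x hx => ?_)
    ((Ideal.span_singleton_le_iff_mem J).2 (Nat.find_spec hP))⟩
  obtain ⟨u, m, hunit, rfl⟩ := exists_isUnit_mul_pow_eq hg hu x
  have hm : g ^ m ∈ J := (J.unit_mul_mem_iff_mem hunit).1 hx
  exact Ideal.mem_span_singleton.2 ((pow_dvd_pow g (Nat.find_min' hP hm)).mul_left u)

theorem pow_eq_zero_of_mem_span_pow_of_lt (hg : IsNilpotent g) {a b : ℕ} (hab : a < b)
    (h : g ^ a ∈ Ideal.span {g ^ b}) : g ^ a = 0 := by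
  obtain ⟨c, hc⟩ := Ideal.mem_span_singleton'.1 h
  have hnil : IsNilpotent (c * g ^ (b - a)) :=
    (Commute.all _ _).isNilpotent_mul_left (hg.pow_of_pos (by omega))
  refine hnil.isUnit_one_sub.mul_right_eq_zero.1 ?_
  rw [sub_mul, one_mul, mul_assoc, ← pow_add, Nat.sub_add_cancel hab.le, hc, sub_self]

theorem eq_of_span_pow_eq_span_pow (hg : g ^ t = 0) (hg' : g ^ (t - 1) ≠ 0) {a b : ℕ}
    (ha : a ≤ t) (hb : b ≤ t) (h : Ideal.span {g ^ a} = Ideal.span {g ^ b}) : a = b := by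
  have key : ∀ {a b : ℕ}, a < b → b ≤ t → Ideal.span {g ^ a} ≠ Ideal.span {g ^ b} := by
    intro a b hab hb h
    have hga :=
      pow_eq_zero_of_mem_span_pow_of_lt ⟨t, hg⟩ hab (h ▸ Ideal.mem_span_singleton_self _)
    exact hg' (pow_eq_zero_of_le (by omega) hga)
  rcases lt_trichotomy a b with hab | hab | hab
  · exact absurd h (key hab hb)
  · exact hab
  · exact absurd h.symm (key hab ha)

end ChainIdeals

section BasicIrreducible

variable {R : Type*} [CommRing R] [IsLocalRing R] {γ : R} {f : R[X]}

theorem isMaximal_span_mk_C_of_irreducible_map (hmax : maximalIdeal R = Ideal.span {γ})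
    (hf : Irreducible (f.map (residue R))) :
    (Ideal.span {Ideal.Quotient.mk (Ideal.span {f}) (C γ)}).IsMaximal := by
  have := PrincipalIdealRing.isMaximal_of_irreducible hf
  let := Ideal.Quotient.field (Ideal.span {f.map (residue R)})
  set Φ := (Ideal.Quotient.mk (Ideal.span {f.map (residue R)})).comp (mapRingHom (residue R))
  have hmap : Function.Surjective (mapRingHom (residue R)) :=
    map_surjective _ residue_surjective
  have hker : RingHom.ker Φ = Ideal.span {f} ⊔ Ideal.span {C γ} := by
    have hspan :
        Ideal.span {f.map (residue R)} = (Ideal.span {f}).map (mapRingHom (residue R)) := by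
      rw [Ideal.map_span, Set.image_singleton, coe_mapRingHom]
    rw [← RingHom.comap_ker, Ideal.mk_ker, hspan, Ideal.comap_map_of_surjective _ hmap,
      ← RingHom.ker_eq_comap_bot, ker_mapRingHom, ker_residue, hmax, Ideal.map_span,
      Set.image_singleton]
  have hΦ : Function.Surjective Φ := Ideal.Quotient.mk_surjective.comp hmap
  have := (RingHom.ker_isMaximal_of_surjective Φ hΦ).map_of_surjective_of_ker_le
    (Ideal.Quotient.mk_surjective (I := Ideal.span {f}))
    (by rw [Ideal.mk_ker, hker]; exact le_sup_left)
  rwa [hker, Ideal.map_sup, Ideal.map_quotient_self, bot_sup_eq, Ideal.map_span,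
    Set.image_singleton] at this

theorem mk_C_ne_zero_of_monic (hm : f.Monic) (hf : Irreducible (f.map (residue R))) {a : R}
    (ha : a ≠ 0) : Ideal.Quotient.mk (Ideal.span {f}) (C a) ≠ 0 := by
  rw [Ne, Ideal.Quotient.eq_zero_iff_mem, Ideal.mem_span_singleton]
  refine hm.not_dvd_of_natDegree_lt (C_ne_zero.2 ha) ?_
  rw [natDegree_C, ← hm.natDegree_map (residue R)]
  exact hf.natDegree_pos

theorem exists_eq_span_mk_C_pow (hmax : maximalIdeal R = Ideal.span {γ}) {t : ℕ}
    (hnil : γ ^ t = 0) (hf : Irreducible (f.map (residue R)))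
    (J : Ideal (R[X] ⧸ Ideal.span {f})) :
    ∃ s ≤ t, J = Ideal.span {Ideal.Quotient.mk (Ideal.span {f}) (C γ) ^ s} := by
  have hγ : Ideal.Quotient.mk (Ideal.span {f}) (C γ) ^ t = 0 := by
    rw [← map_pow, ← C_pow, hnil, C_0, map_zero]
  have hmaxB := isMaximal_span_mk_C_of_irreducible_map hmax hf
  exact exists_eq_span_pow hγ (fun _ => isUnit_of_notMem_span_of_isMaximal ⟨t, hγ⟩ hmaxB) J

theorem eq_of_span_mk_C_pow_eq (hm : f.Monic) (hf : Irreducible (f.map (residue R))) {t : ℕ}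
    (hnil : γ ^ t = 0) (hnil' : γ ^ (t - 1) ≠ 0) {a b : ℕ} (ha : a ≤ t) (hb : b ≤ t)
    (h : Ideal.span {Ideal.Quotient.mk (Ideal.span {f}) (C γ) ^ a} =
      Ideal.span {Ideal.Quotient.mk (Ideal.span {f}) (C γ) ^ b}) : a = b := by
  refine eq_of_span_pow_eq_span_pow ?_ ?_ ha hb h <;> rw [← map_pow, ← C_pow]
  · rw [hnil, C_0, map_zero]
  · exact mk_C_ne_zero_of_monic hm hf hnil'

end BasicIrreducible

section Idempotents

variable {A : Type*} [CommRing A]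

theorem IsIdempotentElem.mul_eq_self_of_mem_span {e x : A} (he : IsIdempotentElem e)
    (hx : x ∈ Ideal.span {e}) : e * x = x := by
  obtain ⟨c, rfl⟩ := Ideal.mem_span_singleton'.1 hx
  rw [mul_left_comm, he.eq]

theorem OrthogonalIdempotents.iSupIndep_of_le_span {ι : Type*} {e : ι → A}
    (he : OrthogonalIdempotents e) {D : ι → Ideal A} (hD : ∀ i, D i ≤ Ideal.span {e i}) :
    iSupIndep D := by
  refine iSupIndep_def.2 fun i => disjoint_iff_inf_le.2 ?_
  rintro x ⟨hxi, hx⟩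
  have hle : ⨆ j, ⨆ (_ : j ≠ i), D j ≤ Ideal.span {1 - e i} :=
    iSup₂_le fun j hj => (hD j).trans <| Ideal.span_singleton_le_span_singleton.2
      ⟨e j, by rw [sub_mul, one_mul, he.ortho hj.symm, sub_zero]⟩
  obtain ⟨c, rfl⟩ := Ideal.mem_span_singleton'.1 (hle hx)
  rw [Submodule.mem_bot, ← (he.idem i).mul_eq_self_of_mem_span (hD i hxi), mul_left_comm,
    mul_sub, mul_one, (he.idem i).eq, sub_self, mul_zero]

theorem Ideal.eq_iSup_inf_span_of_sum_eq_one {ι : Type*} [Fintype ι] {e : ι → A}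
    (hsum : ∑ i, e i = 1) (C : Ideal A) : C = ⨆ i, C ⊓ Ideal.span {e i} := by
  refine le_antisymm (fun x hx => ?_) (iSup_le fun _ => inf_le_left)
  rw [← one_mul x, ← hsum, Finset.sum_mul]
  exact Ideal.sum_mem _ fun i _ => Submodule.mem_iSup_of_mem i
    ⟨C.mul_mem_left _ hx, Ideal.mem_span_singleton'.2 ⟨x, mul_comm _ _⟩⟩

/-- `hker` says that `π` is injective on `eA`; then `π(C)` determines `C ∩ eA`. -/
theorem Ideal.inf_span_eq_comap_map_inf_span {B : Type*} [CommRing B] {π : A →+* B}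
    (hπ : Function.Surjective π) {e : A} (he : IsIdempotentElem e)
    (hker : ∀ x ∈ RingHom.ker π, e * x = 0) (C : Ideal A) :
    C ⊓ Ideal.span {e} = (C.map π).comap π ⊓ Ideal.span {e} := by
  refine le_antisymm (inf_le_inf_right _ Ideal.le_comap_map) ?_
  rintro x ⟨hx, hxe⟩
  obtain ⟨y, hy, hxy⟩ := (Ideal.mem_map_iff_of_surjective π hπ).1 hx
  have hsub : e * (x - y) = 0 := hker _ (by rw [RingHom.mem_ker, map_sub, hxy, sub_self])
  refine ⟨?_, hxe⟩
  rw [← he.mul_eq_self_of_mem_span hxe, show e * x = e * y by linear_combination hsub]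
  exact C.mul_mem_left e hy

theorem CompleteOrthogonalIdempotents.eq_iSup_span_mul_iff {ι : Type*} [Fintype ι]
    {e : ι → A} (he : CompleteOrthogonalIdempotents e) {B : ι → Type*} [∀ i, CommRing (B i)]
    {π : ∀ i, A →+* B i} (hπ : ∀ i, Function.Surjective (π i)) (hπe : ∀ i, π i (e i) = 1)
    (hπe' : ∀ i j, i ≠ j → π i (e j) = 0) (hker : ∀ i, ∀ x ∈ RingHom.ker (π i), e i * x = 0)
    (C : Ideal A) (b : ι → A) :
    C = ⨆ i, Ideal.span {b i * e i} ↔ ∀ i, C.map (π i) = Ideal.span {π i (b i)} := by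
  have hmap : ∀ i j, (Ideal.span {b j * e j}).map (π i) = Ideal.span {π i (b j) * π i (e j)} :=
    fun i j => by rw [Ideal.map_span, Set.image_singleton, map_mul]
  constructor
  · rintro rfl i
    rw [Ideal.map_iSup]
    refine le_antisymm (iSup_le fun j => ?_) (le_iSup_of_le i (by rw [hmap, hπe, mul_one]))
    rcases eq_or_ne i j with rfl | hij
    · rw [hmap, hπe, mul_one]
    · simp [hmap, hπe' i j hij]
  · intro h
    refine (Ideal.eq_iSup_inf_span_of_sum_eq_one he.complete C).trans (iSup_congr fun i => ?_)
    have hle : Ideal.span {b i * e i} ≤ Ideal.span {e i} :=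
      Ideal.span_singleton_le_span_singleton.2 (dvd_mul_left _ _)
    rw [Ideal.inf_span_eq_comap_map_inf_span (hπ i) (he.idem i) (hker i), h i,
      ← mul_one (π i (b i)), ← hπe i, ← hmap,
      ← Ideal.inf_span_eq_comap_map_inf_span (hπ i) (he.idem i) (hker i), inf_of_le_left hle]

theorem IsCompleteOrthoIdem.completeOrthogonalIdempotents {r : ℕ} {e : Fin r → A}
    (he : IsCompleteOrthoIdem e) : CompleteOrthogonalIdempotents e :=
  ⟨⟨he.1, fun i j hij => he.2.2 i j hij⟩, he.2.1⟩

end Idempotents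

section ProductQuotient

variable {S : Type*} [CommRing S] {ι : Type*} [Fintype ι] (f : ι → S)

noncomputable def prodFactor (i : ι) : S ⧸ Ideal.span {∏ j, f j} →+* S ⧸ Ideal.span {f i} :=
  Ideal.Quotient.factor <|
    Ideal.span_singleton_le_span_singleton.2 (Finset.dvd_prod_of_mem f (Finset.mem_univ i))

variable {f}

@[simp]
theorem prodFactor_mk (i : ι) (x : S) :
    prodFactor f i (Ideal.Quotient.mk _ x) = Ideal.Quotient.mk _ x :=
  Ideal.Quotient.factor_mk _ x

theorem prodFactor_surjective (i : ι) : Function.Surjective (prodFactor f i) :=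
  Ideal.Quotient.factor_surjective _

theorem prodFactor_eq_zero_of_mem_span_prod_erase [DecidableEq ι] {i j : ι} (hij : i ≠ j)
    {x : S ⧸ Ideal.span {∏ k, f k}}
    (hx : x ∈ Ideal.span {Ideal.Quotient.mk _ (∏ k ∈ Finset.univ.erase j, f k)}) :
    prodFactor f i x = 0 := by
  obtain ⟨c, rfl⟩ := Ideal.mem_span_singleton'.1 hx
  rw [map_mul, prodFactor_mk, Ideal.Quotient.eq_zero_iff_mem.2, mul_zero]
  exact Ideal.mem_span_singleton.2
    (Finset.dvd_prod_of_mem f (Finset.mem_erase.2 ⟨hij, Finset.mem_univ i⟩))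

theorem mul_eq_zero_of_mem_span_prod_erase [DecidableEq ι] {i : ι} {x y : S ⧸ Ideal.span {∏ k, f k}}
    (hx : x ∈ Ideal.span {Ideal.Quotient.mk _ (∏ k ∈ Finset.univ.erase i, f k)})
    (hy : y ∈ RingHom.ker (prodFactor f i)) : x * y = 0 := by
  rw [prodFactor, Ideal.Quotient.factor_ker,
    Ideal.mem_map_iff_of_surjective _ Ideal.Quotient.mk_surjective] at hy
  obtain ⟨z, hz, rfl⟩ := hy
  obtain ⟨w, rfl⟩ := Ideal.mem_span_singleton'.1 hz
  obtain ⟨c, rfl⟩ := Ideal.mem_span_singleton'.1 hx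
  calc c * Ideal.Quotient.mk _ (∏ k ∈ Finset.univ.erase i, f k) * Ideal.Quotient.mk _ (w * f i)
      = c * Ideal.Quotient.mk _ w *
          Ideal.Quotient.mk _ (f i * ∏ k ∈ Finset.univ.erase i, f k) := by
        simp only [map_mul]; ring
    _ = 0 := by
      rw [Finset.mul_prod_erase _ _ (Finset.mem_univ i), Ideal.Quotient.mk_singleton_self,
        mul_zero]

theorem prodFactor_self_eq_one [DecidableEq ι] {e : ι → S ⧸ Ideal.span {∏ k, f k}}
    (hsum : ∑ j, e j = 1)
    (hmem : ∀ j, e j ∈ Ideal.span {Ideal.Quotient.mk _ (∏ k ∈ Finset.univ.erase j, f k)})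
    (i : ι) : prodFactor f i (e i) = 1 := by
  rw [← map_one (prodFactor f i), ← hsum, map_sum, Finset.sum_eq_single i
    (fun j _ hji => prodFactor_eq_zero_of_mem_span_prod_erase hji.symm (hmem j))
    (fun hi => absurd (Finset.mem_univ i) hi)]

end ProductQuotient

theorem constacyclic_code_unique_decomposition_general
    {R : Type*} [CommRing R] [IsLocalRing R]
    (γ : R) (t : ℕ)
    (hmax : IsLocalRing.maximalIdeal R = Ideal.span {γ})
    (hnil : γ ^ t = 0) (hnil' : γ ^ (t - 1) ≠ 0)
    (lam : R)
    (n : ℕ)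
    {r : ℕ} (f : Fin r → Polynomial R)
    (hmonic : ∀ i, (f i).Monic)
    (hbasic : ∀ i, Irreducible ((f i).map (IsLocalRing.residue R)))
    (hprod : (∏ i, f i) = X ^ n - C lam)
    (e : Fin r → (Polynomial R ⧸ Ideal.span {X ^ n - C lam}))
    (he : IsCompletePrimIdem e)
    (hmem : ∀ i, e i ∈ Ideal.span {Ideal.Quotient.mk (Ideal.span {X ^ n - C lam})
      (∏ j ∈ Finset.univ.erase i, f j)})
    (Ccode : Ideal (Polynomial R ⧸ Ideal.span {X ^ n - C lam})) :
    ∃! s : Fin r → ℕ, (∀ i, s i ≤ t) ∧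
      iSupIndep (fun i => Ideal.span
        {(Ideal.Quotient.mk (Ideal.span {X ^ n - C lam}) (C γ)) ^ s i * e i}) ∧
      Ccode = ⨆ i, Ideal.span
        {(Ideal.Quotient.mk (Ideal.span {X ^ n - C lam}) (C γ)) ^ s i * e i} := by
  generalize X ^ n - C lam = g at *
  subst hprod
  have hce := he.1.completeOrthogonalIdempotents
  have hdecomp := fun s : Fin r → ℕ => hce.eq_iSup_span_mul_iff prodFactor_surjective
    (prodFactor_self_eq_one hce.complete hmem)
    (fun i j hij => prodFactor_eq_zero_of_mem_span_prod_erase hij (hmem j))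
    (fun i _ hx => mul_eq_zero_of_mem_span_prod_erase (hmem i) hx) Ccode
    (fun i => Ideal.Quotient.mk _ (C γ) ^ s i)
  simp only [map_pow, prodFactor_mk] at hdecomp
  choose s hst hs using fun i => exists_eq_span_mk_C_pow hmax hnil (hbasic i)
    (Ccode.map (prodFactor f i))
  refine ⟨s, ⟨hst, hce.iSupIndep_of_le_span fun i =>
      Ideal.span_singleton_le_span_singleton.2 (dvd_mul_left _ _), (hdecomp s).2 hs⟩, ?_⟩
  rintro s' ⟨hs't, -, hC⟩
  funext i
  exact eq_of_span_mk_C_pow_eq (hmonic i) (hbasic i) hnil hnil' (hs't i) (hst i)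
    (((hdecomp s').1 hC i).symm.trans (hs i))

/-- Every ideal of `R[X]/⟨Xⁿ - λ⟩` over a finite chain ring decomposes uniquely as the
internal direct sum `⊕ γ^{sᵢ}·eᵢ·R[x]` with `0 ≤ sᵢ ≤ t`. -/
theorem constacyclic_code_unique_decomposition
    {R : Type*} [CommRing R] [Finite R] [IsLocalRing R]
    (γ : R) (t : ℕ)
    (hmax : IsLocalRing.maximalIdeal R = Ideal.span {γ})
    (hnil : γ ^ t = 0) (hnil' : γ ^ (t - 1) ≠ 0)
    (q : ℕ) (hq : q = Nat.card (IsLocalRing.ResidueField R))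
    (lam : R) (hlam : IsUnit lam)
    (n : ℕ) (hn : 0 < n) (hgcd : Nat.gcd n q = 1)
    {r : ℕ} (f : Fin r → Polynomial R)
    (hmonic : ∀ i, (f i).Monic)
    (hbasic : ∀ i, Irreducible ((f i).map (IsLocalRing.residue R)))
    (hcoprime : ∀ i j, i ≠ j → IsCoprime (f i) (f j))
    (hprod : (∏ i, f i) = X ^ n - C lam)
    (e : Fin r → (Polynomial R ⧸ Ideal.span {X ^ n - C lam}))
    (he : IsCompletePrimIdem e)
    (hmem : ∀ i, e i ∈ Ideal.span {Ideal.Quotient.mk (Ideal.span {X ^ n - C lam})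
      (∏ j ∈ Finset.univ.erase i, f j)})
    (Ccode : Ideal (Polynomial R ⧸ Ideal.span {X ^ n - C lam})) :
    ∃! s : Fin r → ℕ, (∀ i, s i ≤ t) ∧
      iSupIndep (fun i => Ideal.span
        {(Ideal.Quotient.mk (Ideal.span {X ^ n - C lam}) (C γ)) ^ s i * e i}) ∧
      Ccode = ⨆ i, Ideal.span
        {(Ideal.Quotient.mk (Ideal.span {X ^ n - C lam}) (C γ)) ^ s i * e i} :=
  constacyclic_code_unique_decomposition_general γ t hmax hnil hnil' lam n f hmonic hbasic hprod e
    he hmem Ccode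
end

section
/- Let R be a finite commutative chain ring with maximal ideal ⟨γ⟩, nilpotency index t, and residue field of cardinality q. Let λ be a unit of R, n a positive integer with gcd(n, q) = 1, and let C be an ideal of R[x] = R[X]/⟨X^n − λ⟩ of the form C = γ^{r_0}·θ_0·R[x] ⊕ ⋯ ⊕ γ^{r_{l−1}}·θ_{l−1}·R[x], where θ_0, …, θ_l are pairwise orthogonal idempotents summing to 1 and 0 ≤ r_0 < r_1 < ⋯ < r_{l−1} < r_l = t. Then C is the principal ideal generated by w = γ^{r_0}·θ_0 + γ^{r_1}·θ_1 + ⋯ + γ^{r_{l−1}}·θ_{l−1}, i.e. C = w·R[x]. -/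
open Polynomial

/-- A λ-constacyclic code `C = ⊕ γ^{rᵢ}·θᵢ·R[x]` is the principal ideal generated by
`w = ∑ γ^{rᵢ}·θᵢ`. -/
theorem constacyclic_code_principal
    {R : Type*} [CommRing R] [Finite R] [IsLocalRing R]
    (γ : R) (t : ℕ)
    (hmax : IsLocalRing.maximalIdeal R = Ideal.span {γ})
    (hnil : γ ^ t = 0) (hnil' : γ ^ (t - 1) ≠ 0)
    (q : ℕ) (hq : q = Nat.card (IsLocalRing.ResidueField R))
    (lam : R) (hlam : IsUnit lam)
    (n : ℕ) (hn : 0 < n) (hgcd : Nat.gcd n q = 1)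
    (l : ℕ) (θ : Fin (l + 1) → (Polynomial R ⧸ Ideal.span {X ^ n - C lam}))
    (rr : Fin (l + 1) → ℕ)
    (hθ : IsCompleteOrthoIdem θ) (hrr : StrictMono rr) (hlast : rr (Fin.last l) = t)
    (Ccode : Ideal (Polynomial R ⧸ Ideal.span {X ^ n - C lam}))
    (hC : Ccode = ⨆ i : Fin l, Ideal.span
      {(Ideal.Quotient.mk (Ideal.span {X ^ n - C lam}) (C γ)) ^ rr i.castSucc *
        θ i.castSucc}) :
    Ccode = Ideal.span {∑ i : Fin l,
      (Ideal.Quotient.mk (Ideal.span {X ^ n - C lam}) (C γ)) ^ rr i.castSucc *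
        θ i.castSucc} := by
  set g := Ideal.Quotient.mk (Ideal.span {X ^ n - C lam}) (C γ) with hg
  set w := ∑ i : Fin l, g ^ rr i.castSucc * θ i.castSucc with hw
  obtain ⟨hidem, hsum, horth⟩ := hθ
  apply le_antisymm
  · rw [hC]
    apply iSup_le
    intro i
    rw [Ideal.span_singleton_le_iff_mem, Ideal.mem_span_singleton]
    refine ⟨θ i.castSucc, ?_⟩
    rw [hw, Finset.sum_mul]
    rw [Finset.sum_eq_single i]
    · rw [mul_assoc, hidem i.castSucc]
    · intro j _ hji
      rw [mul_assoc, horth _ _ (by simpa using hji), mul_zero]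
    · simp
  · rw [Ideal.span_le, Set.singleton_subset_iff, hC]
    exact Ideal.sum_mem _ fun i _ =>
      Ideal.mem_iSup_of_mem i (Ideal.subset_span rfl)
end

section
/- Let R be a finite commutative chain ring with maximal ideal ⟨γ⟩, nilpotency index t, and residue field of cardinality q. Let λ be a unit of R, n a positive integer with gcd(n, q) = 1, and let C be an ideal of R[x] = R[X]/⟨X^n − λ⟩ of the form C = γ^{r_0}·θ_0·R[x] ⊕ ⋯ ⊕ γ^{r_{l−1}}·θ_{l−1}·R[x], where θ_0, …, θ_l are pairwise orthogonal idempotents summing to 1, 0 ≤ r_0 < ⋯ < r_{l−1} < r_l = t, and g_0, …, g_l ∈ R[X] are monic pairwise coprime polynomials with g_0⋯g_l = X^n − λ and θ_i·R[x] ≅ R[X]/⟨g_i⟩ for all i. Then the cardinality of C is |C| = q^{∑_{i=0}^{l−1} (t − r_i)·deg(g_i)}. -/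
open Polynomial

/-!
The idempotents `θᵢ` split `R[x]` into the components `θᵢ·R[x] ≅ R[X]/⟨gᵢ⟩`, so `C` is the direct
sum of the `γ^{rᵢ}`-multiples of these components and `|C|` is the product of their
cardinalities. As `gᵢ` is monic, `R[X]/⟨gᵢ⟩ ≅ R^{deg gᵢ}` as `R`-modules, so its `γ^r`-multiples
form a copy of `(γ^r R)^{deg gᵢ}`. In the chain ring, multiplication by `γ^k` induces
`R/⟨γ⟩ ≅ γ^k R / γ^{k+1} R` for `k < t`, whence `|γ^r R| = q^{t-r}`.
-/

open IsLocalRing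

section ChainRing

variable {R : Type*} [CommRing R] [IsLocalRing R] {γ : R}

theorem pow_mul_mem_span_pow_succ_iff (hmax : maximalIdeal R = Ideal.span {γ}) {k : ℕ}
    (hk : γ ^ k ≠ 0) {x : R} :
    γ ^ k * x ∈ Ideal.span {γ ^ (k + 1)} ↔ x ∈ maximalIdeal R := by
  constructor
  · intro hx
    obtain ⟨a, ha⟩ := Ideal.mem_span_singleton'.mp hx
    have hdiff : x - γ * a ∈ maximalIdeal R := by
      rw [mem_maximalIdeal, mem_nonunits_iff]
      intro hu
      exact hk (hu.mul_left_eq_zero.mp (by rw [mul_sub, ← ha]; ring))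
    have hγa : γ * a ∈ maximalIdeal R :=
      hmax ▸ Ideal.mul_mem_right a _ (Ideal.mem_span_singleton_self γ)
    simpa using Ideal.add_mem _ hdiff hγa
  · intro hx
    rw [hmax] at hx
    obtain ⟨a, rfl⟩ := Ideal.mem_span_singleton'.mp hx
    exact Ideal.mem_span_singleton'.mpr ⟨a, by ring⟩

theorem card_span_pow_eq_card_residueField_mul (hmax : maximalIdeal R = Ideal.span {γ})
    {k : ℕ} (hk : γ ^ k ≠ 0) :
    Nat.card (Ideal.span {γ ^ k}) =
      Nat.card (ResidueField R) * Nat.card (Ideal.span {γ ^ (k + 1)}) := by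
  set P : Ideal R := Ideal.span {γ ^ k}
  have hle : Ideal.span {γ ^ (k + 1)} ≤ P :=
    Ideal.span_singleton_le_span_singleton.mpr (pow_dvd_pow γ k.le_succ)
  set N := Submodule.comap P.subtype (Ideal.span {γ ^ (k + 1)} : Submodule R R)
  let f : R →ₗ[R] P ⧸ N := N.mkQ ∘ₗ LinearMap.codRestrict P (LinearMap.mulLeft R (γ ^ k))
    fun x => Ideal.mul_mem_right x _ (Ideal.mem_span_singleton_self _)
  have hsurj : Function.Surjective f := by
    refine N.mkQ_surjective.comp fun y => ?_
    obtain ⟨a, ha⟩ := Ideal.mem_span_singleton'.mp y.2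
    exact ⟨a, Subtype.ext (by rw [← ha]; exact mul_comm _ _)⟩
  have hker : LinearMap.ker f = maximalIdeal R := by
    ext x
    rw [LinearMap.mem_ker, ← pow_mul_mem_span_pow_succ_iff hmax hk]
    exact Submodule.Quotient.mk_eq_zero N
  rw [N.card_eq_card_quotient_mul_card, mul_comm,
    Nat.card_congr (Submodule.comapSubtypeEquivOfLe hle).toEquiv,
    ← Nat.card_congr (f.quotKerEquivOfSurjective hsurj).toEquiv, hker]
  rfl

theorem card_span_pow_eq_card_residueField_pow (hmax : maximalIdeal R = Ideal.span {γ})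
    {t : ℕ} (hnil : γ ^ t = 0) (hnil' : γ ^ (t - 1) ≠ 0) {r : ℕ} (hr : r ≤ t) :
    Nat.card (Ideal.span {γ ^ r}) = Nat.card (ResidueField R) ^ (t - r) := by
  induction hr using Nat.decreasingInduction with
  | self => simp [hnil]
  | of_succ k hk ih =>
    have hγk : γ ^ k ≠ 0 := fun h => hnil' (pow_eq_zero_of_le (by omega) h)
    rw [card_span_pow_eq_card_residueField_mul hmax hγk, ih, ← pow_succ',
      Nat.sub_add_eq, Nat.sub_add_cancel (by omega)]

end ChainRing

theorem Module.Basis.card_range_smul {R ι M : Type*} [CommRing R] [Finite ι] [AddCommGroup M]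
    [Module R M] (b : Basis ι R M) (c : R) :
    Nat.card (Set.range fun x : M => c • x) = Nat.card (Ideal.span {c}) ^ Nat.card ι := by
  have hcoord : b.equivFun '' Set.range (fun x : M => c • x) =
      Set.pi Set.univ fun _ => (Ideal.span {c} : Set R) := by
    have hR : Set.range (fun a : R => c • a) = (Ideal.span {c} : Set R) := by
      ext a
      simp [Ideal.mem_span_singleton', mul_comm]
    have hcomm : b.equivFun ∘ (fun x : M => c • x) = Pi.map (fun _ a => c • a) ∘ b.equivFun :=
      funext fun x => map_smul b.equivFun c x
    rw [← Set.range_comp, hcomm, b.equivFun.surjective.range_comp, Set.range_piMap, hR]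
  rw [← Nat.card_image_of_injective b.equivFun.injective, hcoord,
    Nat.card_congr (Equiv.Set.univPi _), Nat.card_fun]
  rfl

theorem card_span_algebraMap_mul_eq_card_range_smul {S A M : Type*} [CommRing S] [CommRing A]
    [Algebra S A] [AddCommGroup M] [Module S M] {θ : A}
    (φ : M ≃ₗ[S] (Ideal.span {θ} : Ideal A).restrictScalars S) (s : S) :
    Nat.card (Ideal.span {algebraMap S A s * θ}) = Nat.card (Set.range fun x : M => s • x) := by
  have himage : (fun x => (φ x : A)) '' Set.range (fun x : M => s • x) =
      (Ideal.span {algebraMap S A s * θ} : Set A) := by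
    ext y
    simp only [Set.mem_image, Set.mem_range, exists_exists_eq_and, map_smul, SetLike.mem_coe,
      Ideal.mem_span_singleton']
    constructor
    · rintro ⟨m, rfl⟩
      obtain ⟨b, hb⟩ := Ideal.mem_span_singleton'.mp (φ m).2
      exact ⟨b, by rw [Submodule.coe_smul, Algebra.smul_def, ← hb]; ring⟩
    · rintro ⟨b, rfl⟩
      refine ⟨φ.symm ⟨b * θ, Ideal.mul_mem_left _ b (Ideal.mem_span_singleton_self θ)⟩, ?_⟩
      rw [LinearEquiv.apply_symm_apply, Submodule.coe_smul, Algebra.smul_def]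
      ring
  rw [← SetLike.coe_sort_coe, ← himage]
  exact Nat.card_image_of_injective (Subtype.val_injective.comp φ.injective) _

theorem card_iSup_eq_prod_card_of_mul_eq_self {A ι : Type*} [CommRing A] [Fintype ι]
    {e : ι → A} (he : Pairwise fun i j => e i * e j = 0) {p : ι → Ideal A}
    (hp : ∀ i, ∀ x ∈ p i, x * e i = x) :
    Nat.card (⨆ i, p i : Ideal A) = ∏ i, Nat.card (p i) := by
  let σ : (∀ i, p i) → A := fun μ => ∑ i, (μ i : A)
  have hproj : ∀ μ j, σ μ * e j = μ j := by
    intro μ j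
    rw [Finset.sum_mul, Finset.sum_eq_single j (fun i _ hij => ?_) (by simp)]
    · exact hp j _ (μ j).2
    · rw [← hp i _ (μ i).2, mul_assoc, he hij, mul_zero]
  have hinj : Function.Injective σ := fun μ ν h =>
    funext fun j => Subtype.ext (by rw [← hproj, h, hproj])
  have hrange : Set.range σ = (⨆ i, p i : Ideal A) := by
    ext a
    simpa using (Submodule.mem_iSup_finset_iff_exists_sum p a (s := Finset.univ)).symm
  rw [← SetLike.coe_sort_coe, ← hrange, Nat.card_range_of_injective hinj, Nat.card_pi]

theorem card_span_C_pow_mul_of_equiv_quotient {R : Type*} [CommRing R] [IsLocalRing R] {γ : R}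
    (hmax : maximalIdeal R = Ideal.span {γ}) {t : ℕ} (hnil : γ ^ t = 0)
    (hnil' : γ ^ (t - 1) ≠ 0) {r : ℕ} (hr : r ≤ t) {f g : R[X]} (hg : g.Monic)
    {θ : R[X] ⧸ Ideal.span {f}}
    (φ : (R[X] ⧸ Ideal.span {g}) ≃ₗ[R[X]] (Ideal.span {θ}).restrictScalars R[X]) :
    Nat.card (Ideal.span {Ideal.Quotient.mk (Ideal.span {f}) (C γ) ^ r * θ}) =
      Nat.card (ResidueField R) ^ ((t - r) * g.natDegree) := by
  have hsmul : (fun x : R[X] ⧸ Ideal.span {g} => C (γ ^ r) • x) = fun x => γ ^ r • x :=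
    funext fun x => algebraMap_smul R[X] (γ ^ r) x
  rw [← map_pow, ← map_pow C, ← Ideal.Quotient.algebraMap_eq,
    card_span_algebraMap_mul_eq_card_range_smul φ, hsmul]
  refine ((AdjoinRoot.powerBasisAux' hg).card_range_smul (γ ^ r)).trans ?_
  rw [card_span_pow_eq_card_residueField_pow hmax hnil hnil' hr, Nat.card_fin, pow_mul]

theorem constacyclic_code_card_general
    {R : Type*} [CommRing R] [IsLocalRing R]
    (γ : R) (t : ℕ)
    (hmax : IsLocalRing.maximalIdeal R = Ideal.span {γ})
    (hnil : γ ^ t = 0) (hnil' : γ ^ (t - 1) ≠ 0)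
    (q : ℕ) (hq : q = Nat.card (IsLocalRing.ResidueField R))
    (lam : R)
    (n : ℕ)
    (l : ℕ) (θ : Fin (l + 1) → (Polynomial R ⧸ Ideal.span {X ^ n - C lam}))
    (rr : Fin (l + 1) → ℕ)
    (hθ : IsCompleteOrthoIdem θ) (hrr : StrictMono rr) (hlast : rr (Fin.last l) = t)
    (g : Fin (l + 1) → Polynomial R) (hmonic : ∀ i, (g i).Monic)
    (hiso : ∀ i, Nonempty ((Polynomial R ⧸ Ideal.span {g i}) ≃ₗ[Polynomial R]
      Submodule.restrictScalars (Polynomial R)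
        (Ideal.span {θ i} : Ideal (Polynomial R ⧸ Ideal.span {X ^ n - C lam}))))
    (Ccode : Ideal (Polynomial R ⧸ Ideal.span {X ^ n - C lam}))
    (hC : Ccode = ⨆ i : Fin l, Ideal.span
      {(Ideal.Quotient.mk (Ideal.span {X ^ n - C lam}) (C γ)) ^ rr i.castSucc *
        θ i.castSucc}) :
    Nat.card Ccode = q ^ (∑ i : Fin l, (t - rr i.castSucc) * (g i.castSucc).natDegree) := by
  obtain ⟨hidem, -, horth⟩ := hθ
  have hθorth : Pairwise fun i j : Fin l => θ i.castSucc * θ j.castSucc = 0 :=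
    fun i j hij => horth _ _ ((Fin.castSucc_injective l).ne hij)
  have habsorb : ∀ i : Fin l, ∀ x ∈ Ideal.span
      {Ideal.Quotient.mk _ (C γ) ^ rr i.castSucc * θ i.castSucc}, x * θ i.castSucc = x := by
    intro i x hx
    obtain ⟨a, rfl⟩ := Ideal.mem_span_singleton'.mp hx
    rw [mul_assoc, mul_assoc, hidem i.castSucc]
  have hcomponent : ∀ i : Fin l, Nat.card (Ideal.span
      {Ideal.Quotient.mk _ (C γ) ^ rr i.castSucc * θ i.castSucc}) =
        q ^ ((t - rr i.castSucc) * (g i.castSucc).natDegree) := by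
    intro i
    obtain ⟨φ⟩ := hiso i.castSucc
    have hr : rr i.castSucc ≤ t := hlast ▸ hrr.monotone (Fin.le_last _)
    rw [hq, card_span_C_pow_mul_of_equiv_quotient hmax hnil hnil' hr (hmonic _) φ]
  rw [hC, card_iSup_eq_prod_card_of_mul_eq_self hθorth habsorb,
    Finset.prod_congr rfl fun i _ => hcomponent i, Finset.prod_pow_eq_pow_sum]

/-- Cardinality of a λ-constacyclic code `C = ⊕ γ^{rᵢ}·θᵢ·R[x]`:
`|C| = q^{∑ (t - rᵢ)·deg gᵢ}`. -/
theorem constacyclic_code_card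
    {R : Type*} [CommRing R] [Finite R] [IsLocalRing R]
    (γ : R) (t : ℕ)
    (hmax : IsLocalRing.maximalIdeal R = Ideal.span {γ})
    (hnil : γ ^ t = 0) (hnil' : γ ^ (t - 1) ≠ 0)
    (q : ℕ) (hq : q = Nat.card (IsLocalRing.ResidueField R))
    (lam : R) (hlam : IsUnit lam)
    (n : ℕ) (hn : 0 < n) (hgcd : Nat.gcd n q = 1)
    (l : ℕ) (θ : Fin (l + 1) → (Polynomial R ⧸ Ideal.span {X ^ n - C lam}))
    (rr : Fin (l + 1) → ℕ)
    (hθ : IsCompleteOrthoIdem θ) (hrr : StrictMono rr) (hlast : rr (Fin.last l) = t)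
    (g : Fin (l + 1) → Polynomial R) (hmonic : ∀ i, (g i).Monic)
    (hcoprime : ∀ i j, i ≠ j → IsCoprime (g i) (g j))
    (hprod : (∏ i, g i) = X ^ n - C lam)
    (hiso : ∀ i, Nonempty ((Polynomial R ⧸ Ideal.span {g i}) ≃ₗ[Polynomial R]
      Submodule.restrictScalars (Polynomial R)
        (Ideal.span {θ i} : Ideal (Polynomial R ⧸ Ideal.span {X ^ n - C lam}))))
    (Ccode : Ideal (Polynomial R ⧸ Ideal.span {X ^ n - C lam}))
    (hC : Ccode = ⨆ i : Fin l, Ideal.span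
      {(Ideal.Quotient.mk (Ideal.span {X ^ n - C lam}) (C γ)) ^ rr i.castSucc *
        θ i.castSucc}) :
    Nat.card Ccode = q ^ (∑ i : Fin l, (t - rr i.castSucc) * (g i.castSucc).natDegree) :=
  constacyclic_code_card_general γ t hmax hnil hnil' q hq lam n l θ rr hθ hrr hlast g hmonic hiso
    Ccode hC
end

section
/- Let R be a finite commutative chain ring, λ a unit of R, n a positive integer, and let I be an ideal of R[x] = R[X]/⟨X^n − λ⟩ which is the internal direct sum I = h_1·R[x] ⊕ ⋯ ⊕ h_r·R[x] of the ideals generated by elements h_1, …, h_r. Then the set I^* = { f^* : f ∈ I } is an ideal of R[X]/⟨X^n − λ^{-1}⟩ and is the internal direct sum I^* = h_1^*·R[x'] ⊕ ⋯ ⊕ h_r^*·R[x'] of the ideals generated by the reciprocals h_i^*. -/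
open Polynomial

/-!
Write `x'` for the class of `X` in `R[X]/⟨Xⁿ - λ⁻¹⟩`; it is a unit with inverse `λ·x'ⁿ⁻¹`.
The substitution `x ↦ x'⁻¹` is a ring isomorphism `σ : R[X]/⟨Xⁿ - λ⟩ ≃ R[X]/⟨Xⁿ - λ⁻¹⟩`
(its inverse is the analogous substitution back), and evaluating the reversed coefficient list
at `x'` gives `f* = x'ⁿ⁻¹ · σ f`. So `f ↦ f*` is a ring isomorphism followed by multiplication by
a unit: it maps every ideal onto its image under `σ`, sends `hR[x]` to `h*R[x']`, and transports
sums and independence of ideals through the order isomorphism of ideal lattices induced by `σ`.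
-/

namespace AdjoinRoot

variable {R : Type*} [CommRing R]

theorem root_X_pow_sub_C_pow (n : ℕ) (a : R) : root (X ^ n - C a) ^ n = of _ a := by
  have h := mk_self (f := X ^ n - C a)
  rwa [map_sub, map_pow, mk_X, mk_C, sub_eq_zero] at h

variable {n : ℕ} {a b : R}

theorem root_mul_of_mul_root_pow_pred (hab : a * b = 1) (hn : 0 < n) :
    root (X ^ n - C b) * (of _ a * root (X ^ n - C b) ^ (n - 1)) = 1 := by
  rw [mul_left_comm, ← pow_succ', Nat.sub_add_cancel hn, root_X_pow_sub_C_pow, ← map_mul,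
    hab, map_one]

theorem pow_eq_of_root_mul_eq_one (hab : a * b = 1) {y : AdjoinRoot (X ^ n - C b)}
    (hy : root _ * y = 1) : y ^ n = of _ a := calc
  y ^ n = y ^ n * (of _ b * of _ a) := by rw [← map_mul, mul_comm b, hab, map_one, mul_one]
  _ = (root _ * y) ^ n * of _ a := by rw [mul_pow, root_X_pow_sub_C_pow]; ring
  _ = of _ a := by rw [hy, one_pow, one_mul]

noncomputable def invRootHom (n : ℕ) (hab : a * b = 1) (hn : 0 < n) :
    AdjoinRoot (X ^ n - C a) →ₐ[R] AdjoinRoot (X ^ n - C b) :=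
  liftAlgHom _ (Algebra.ofId R _) (of _ a * root (X ^ n - C b) ^ (n - 1)) <| by
    simp [pow_eq_of_root_mul_eq_one hab (root_mul_of_mul_root_pow_pred hab hn)]

theorem root_mul_invRootHom_root (hab : a * b = 1) (hn : 0 < n) :
    root (X ^ n - C b) * invRootHom n hab hn (root _) = 1 := by
  rw [invRootHom, liftAlgHom_root, root_mul_of_mul_root_pow_pred hab hn]

theorem invRootHom_mk (hab : a * b = 1) (hn : 0 < n) (p : R[X]) :
    invRootHom n hab hn (mk _ p) = aeval (invRootHom n hab hn (root _)) p := by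
  rw [← aeval_eq, aeval_algHom_apply]

theorem invRootHom_comp_invRootHom (hab : a * b = 1) (hba : b * a = 1) (hn : 0 < n) :
    (invRootHom n hba hn).comp (invRootHom n hab hn) = AlgHom.id R _ := by
  refine algHom_ext ?_
  have h := congrArg (invRootHom n hba hn) (root_mul_invRootHom_root hab hn)
  rw [map_mul, map_one] at h
  exact (left_inv_eq_right_inv (root_mul_invRootHom_root hba hn) h).symm

noncomputable def invRootEquiv (n : ℕ) (hab : a * b = 1) (hn : 0 < n) :
    AdjoinRoot (X ^ n - C a) ≃ₐ[R] AdjoinRoot (X ^ n - C b) :=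
  have hba : b * a = 1 := by rwa [mul_comm]
  AlgEquiv.ofAlgHom (invRootHom n hab hn) (invRootHom n hba hn)
    (invRootHom_comp_invRootHom hba hab hn) (invRootHom_comp_invRootHom hab hba hn)

end AdjoinRoot

namespace Polynomial

theorem aeval_reflect_eq_pow_mul {R S : Type*} [CommSemiring R] [CommSemiring S] [Algebra R S]
    {x y : S} (hxy : x * y = 1) {N : ℕ} {p : R[X]} (hp : p.natDegree ≤ N) :
    aeval x (reflect N p) = x ^ N * aeval y p := by
  let _ := invertibleOfRightInverse y x (by rwa [mul_comm])
  rw [aeval_def, aeval_def, ← eval₂_reflect_mul_pow _ y N p hp, mul_left_comm, ← mul_pow, hxy,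
    one_pow, mul_one]
  rfl

theorem natDegree_modByMonic_X_pow_sub_C_le {R : Type*} [CommRing R] (p : R[X]) (a : R)
    {n : ℕ} (hn : 0 < n) : (p %ₘ (X ^ n - C a)).natDegree ≤ n - 1 := by
  cases subsingleton_or_nontrivial R
  · simp [Subsingleton.elim (p %ₘ (X ^ n - C a)) 0]
  · have hne : X ^ n - C a ≠ 1 := fun h => by
      simpa [h, hn.ne] using natDegree_X_pow_sub_C (n := n) (r := a)
    have := natDegree_modByMonic_lt p (monic_X_pow_sub_C a hn.ne') hne
    rw [natDegree_X_pow_sub_C] at this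
    omega

end Polynomial

open AdjoinRoot in
theorem recip_X_pow_sub_C_eq_root_pow_mul {R : Type*} [CommRing R] {n : ℕ} {a b : R}
    (hab : a * b = 1) (hn : 0 < n) (f : AdjoinRoot (X ^ n - C a)) :
    recip n (X ^ n - C a) (X ^ n - C b) f = root _ ^ (n - 1) * invRootEquiv n hab hn f := by
  set q := (Ideal.Quotient.mk_surjective f).choose
  have hq : mk _ q = f := (Ideal.Quotient.mk_surjective f).choose_spec
  have hmonic : (X ^ n - C a).Monic := monic_X_pow_sub_C a hn.ne'
  have hrep : mk _ (q %ₘ (X ^ n - C a)) = f := by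
    rw [← modByMonicHom_mk hmonic, mk_leftInverse hmonic, hq]
  change mk _ (reflect (n - 1) (q %ₘ _)) = _
  rw [← aeval_eq, aeval_reflect_eq_pow_mul (root_mul_invRootHom_root hab hn)
    (natDegree_modByMonic_X_pow_sub_C_le q a hn), ← invRootHom_mk, hrep]
  rfl

namespace Ideal

variable {A B : Type*} [CommSemiring A] [CommSemiring B] (σ : A ≃+* B) (c : Bˣ)

theorem image_units_mul_ringEquiv (I : Ideal A) :
    (fun f => (c : B) * σ f) '' (I : Set A) = I.map σ := by
  ext y
  rw [Set.mem_image, SetLike.mem_coe, mem_map_of_equiv]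
  constructor
  · rintro ⟨f, hf, rfl⟩
    exact ⟨σ.symm c * f, I.mul_mem_left _ hf, by simp⟩
  · rintro ⟨f, hf, rfl⟩
    exact ⟨σ.symm ↑c⁻¹ * f, I.mul_mem_left _ hf, by simp⟩

theorem span_singleton_units_mul_ringEquiv (x : A) :
    span {(c : B) * σ x} = (span {x}).map σ := by
  rw [map_span, Set.image_singleton, span_singleton_mul_left_unit c.isUnit]

end Ideal

open AdjoinRoot in
theorem exists_recip_eq_units_mul_ringEquiv {R : Type*} [CommRing R] {n : ℕ} {a b : R}
    (hab : a * b = 1) (hn : 0 < n) :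
    ∃ (σ : R[X] ⧸ Ideal.span {X ^ n - C a} ≃+* R[X] ⧸ Ideal.span {X ^ n - C b})
      (c : (R[X] ⧸ Ideal.span {X ^ n - C b})ˣ),
      recip n (X ^ n - C a) (X ^ n - C b) = fun f => (c : R[X] ⧸ _) * σ f := by
  obtain ⟨c, hc⟩ : IsUnit (root (X ^ n - C b) ^ (n - 1)) :=
    (IsUnit.of_mul_eq_one _ (root_mul_invRootHom_root hab hn)).pow _
  exact ⟨(invRootEquiv n hab hn).toRingEquiv, c, funext fun f =>
    (recip_X_pow_sub_C_eq_root_pow_mul hab hn f).trans (congrArg (· * _) hc.symm)⟩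

theorem recip_of_direct_sum_ideal_general {R : Type*} [CommRing R]
    (u : Rˣ) (n : ℕ) (hn : 0 < n)
    {r : ℕ} (h : Fin r → (Polynomial R ⧸ Ideal.span {X ^ n - C (u : R)}))
    (I : Ideal (Polynomial R ⧸ Ideal.span {X ^ n - C (u : R)}))
    (hind : iSupIndep fun i => Ideal.span {h i})
    (hI : I = ⨆ i, Ideal.span {h i}) :
    (recip n (X ^ n - C (u : R)) (X ^ n - C ((u⁻¹ : Rˣ) : R))) '' (I : Set _)
      = ((⨆ i, Ideal.span
            {recip n (X ^ n - C (u : R)) (X ^ n - C ((u⁻¹ : Rˣ) : R)) (h i)} :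
          Ideal (Polynomial R ⧸ Ideal.span {X ^ n - C ((u⁻¹ : Rˣ) : R)})) : Set _) ∧
    iSupIndep fun i => Ideal.span
      {recip n (X ^ n - C (u : R)) (X ^ n - C ((u⁻¹ : Rˣ) : R)) (h i)} := by
  obtain ⟨σ, c, hrecip⟩ := exists_recip_eq_units_mul_ringEquiv u.mul_inv hn
  have hspan : (fun i => Ideal.span {recip n _ _ (h i)}) =
      σ.idealComapOrderIso.symm ∘ fun i => Ideal.span {h i} := by
    funext i
    rw [hrecip, Function.comp_apply, RingEquiv.idealComapOrderIso_symm_apply,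
      Ideal.span_singleton_units_mul_ringEquiv]
  refine ⟨?_, hspan ▸ hind.map_orderIso _⟩
  rw [hI, hrecip, Ideal.image_units_mul_ringEquiv, Ideal.map_iSup]
  simp only [Ideal.span_singleton_units_mul_ringEquiv]

/-- If an ideal `I` of `R[X]/⟨Xⁿ - λ⟩` is the internal direct sum of the ideals `hᵢ·R[x]`,
then `I* = {f* : f ∈ I}` is the ideal of `R[X]/⟨Xⁿ - λ⁻¹⟩` given by the internal direct sum
of the ideals `hᵢ*·R[x']`. -/
theorem recip_of_direct_sum_ideal {R : Type*} [CommRing R] [Finite R] [IsLocalRing R]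
    (hprinc : (IsLocalRing.maximalIdeal R).IsPrincipal)
    (u : Rˣ) (n : ℕ) (hn : 0 < n)
    {r : ℕ} (h : Fin r → (Polynomial R ⧸ Ideal.span {X ^ n - C (u : R)}))
    (I : Ideal (Polynomial R ⧸ Ideal.span {X ^ n - C (u : R)}))
    (hind : iSupIndep fun i => Ideal.span {h i})
    (hI : I = ⨆ i, Ideal.span {h i}) :
    (recip n (X ^ n - C (u : R)) (X ^ n - C ((u⁻¹ : Rˣ) : R))) '' (I : Set _)
      = ((⨆ i, Ideal.span
            {recip n (X ^ n - C (u : R)) (X ^ n - C ((u⁻¹ : Rˣ) : R)) (h i)} :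
          Ideal (Polynomial R ⧸ Ideal.span {X ^ n - C ((u⁻¹ : Rˣ) : R)})) : Set _) ∧
    iSupIndep fun i => Ideal.span
      {recip n (X ^ n - C (u : R)) (X ^ n - C ((u⁻¹ : Rˣ) : R)) (h i)} :=
  recip_of_direct_sum_ideal_general u n hn h I hind hI
end

section
/- Let R be a finite commutative chain ring with maximal ideal ⟨γ⟩, nilpotency index t, and residue field of cardinality q. Let λ be a unit of R and n a positive integer with gcd(n, q) = 1. If C is a λ-constacyclic code of length n over R which is self-orthogonal (C ⊆ C⊥) and non-trivial (C is not contained in γ^{⌈t/2⌉}·R^n), then the image of λ in the residue field R/⟨γ⟩ equals 1 or −1; that is, λ − 1 ∈ ⟨γ⟩ or λ + 1 ∈ ⟨γ⟩. -/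
open Polynomial

/-!
If `λ ≢ ±1` modulo `γ`, then `λ² - 1` is a unit. Comparing the self-inner products of `a` and of
its shift `σa` in a self-orthogonal constacyclic code `C` gives
`0 = ⟨σa, σa⟩ - ⟨a, a⟩ = (λ² - 1) a_(n-1)²`, so every word of `C` squares to zero in its last
coordinate; since the shift moves `a_(i-1)` to position `i` for `i ≠ 0`, every coordinate of every
word squares to zero. In a chain ring a nonzero `x` is `γ^k u` with `u` a unit and `k < t`, so
`x² = 0` forces `2k ≥ t`, i.e. `γ^⌈t/2⌉ ∣ x`, and `C` is trivial.
-/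

section ChainRing

variable {R : Type*} [CommRing R] [IsLocalRing R] {γ : R}
  (hmax : IsLocalRing.maximalIdeal R = Ideal.span {γ})
include hmax

theorem pow_dvd_or_exists_eq_pow_mul_unit (m : ℕ) (x : R) :
    γ ^ m ∣ x ∨ ∃ k < m, ∃ u, IsUnit u ∧ x = γ ^ k * u := by
  induction m with
  | zero => exact Or.inl (by simp)
  | succ m ih =>
    rcases ih with ⟨y, rfl⟩ | ⟨k, hk, u, hu, rfl⟩
    · by_cases hy : IsUnit y
      · exact Or.inr ⟨m, m.lt_succ_self, y, hy, rfl⟩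
      · have hy : y ∈ Ideal.span {γ} := hmax ▸ (IsLocalRing.mem_maximalIdeal y).mpr hy
        obtain ⟨z, rfl⟩ := Ideal.mem_span_singleton.mp hy
        exact Or.inl ⟨z, by ring⟩
    · exact Or.inr ⟨k, by omega, u, hu, rfl⟩

theorem exists_eq_pow_mul_unit {t : ℕ} (hnil : γ ^ t = 0) {x : R} (hx : x ≠ 0) :
    ∃ k < t, ∃ u, IsUnit u ∧ x = γ ^ k * u := by
  refine (pow_dvd_or_exists_eq_pow_mul_unit hmax t x).resolve_left fun hdvd => hx ?_
  rwa [hnil, zero_dvd_iff] at hdvd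

theorem pow_half_dvd_of_mul_self_eq_zero {t : ℕ} (hnil : γ ^ t = 0) (hnil' : γ ^ (t - 1) ≠ 0)
    {x : R} (hx : x * x = 0) : γ ^ ((t + 1) / 2) ∣ x := by
  rcases eq_or_ne x 0 with rfl | hx0
  · exact dvd_zero _
  obtain ⟨k, -, u, hu, rfl⟩ := exists_eq_pow_mul_unit hmax hnil hx0
  have h2k : γ ^ (2 * k) = 0 :=
    (hu.mul hu).mul_left_eq_zero.mp (by rw [← hx]; ring)
  have ht : t ≤ 2 * k := by
    by_contra! h
    exact hnil' (by rw [show t - 1 = 2 * k + (t - 1 - 2 * k) by omega, pow_add, h2k, zero_mul])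
  exact (pow_dvd_pow γ (by omega)).trans (dvd_mul_right _ _)

end ChainRing

theorem isUnit_sq_sub_one_of_notMem {R : Type*} [CommRing R] [IsLocalRing R] {lam : R}
    (h₁ : lam - 1 ∉ IsLocalRing.maximalIdeal R) (h₂ : lam + 1 ∉ IsLocalRing.maximalIdeal R) :
    IsUnit (lam ^ 2 - 1) := by
  rw [show lam ^ 2 - 1 = (lam - 1) * (lam + 1) by ring]
  exact (IsLocalRing.notMem_maximalIdeal.mp h₁).mul (IsLocalRing.notMem_maximalIdeal.mp h₂)

section Constacyclic

variable {R : Type*} [CommRing R] {n : ℕ}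

theorem mem_scalarCode {c : R} {a : Fin n → R} : a ∈ scalarCode n c ↔ ∀ i, c ∣ a i :=
  Iff.rfl

@[simp]
theorem ctShift_zero (lam : R) (a : Fin (n + 1) → R) : ctShift lam a 0 = lam * a (Fin.last n) := by
  simp only [ctShift, if_pos]
  congr
  ext
  simp

@[simp]
theorem ctShift_succ (lam : R) (a : Fin (n + 1) → R) (i : Fin n) :
    ctShift lam a i.succ = a i.castSucc := by
  simp only [ctShift, if_neg (Fin.succ_ne_zero i)]
  congr
  ext
  simp [Fin.coe_sub_one]

theorem sum_ctShift_mul_ctShift (lam : R) (a b : Fin (n + 1) → R) :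
    ∑ i, ctShift lam a i * ctShift lam b i
      = ∑ i, a i * b i + (lam ^ 2 - 1) * (a (Fin.last n) * b (Fin.last n)) := by
  rw [Fin.sum_univ_succ, Fin.sum_univ_castSucc (fun i => a i * b i)]
  simp only [ctShift_zero, ctShift_succ]
  ring

theorem forall_coord_of_forall_last {lam : R} {C : Submodule R (Fin (n + 1) → R)}
    (hcc : ∀ a ∈ C, ctShift lam a ∈ C) {p : R → Prop} (hlast : ∀ a ∈ C, p (a (Fin.last n))) :
    ∀ a ∈ C, ∀ i, p (a i) := by
  intro a ha i
  induction i using Fin.reverseInduction generalizing a with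
  | last => exact hlast a ha
  | cast i ih => simpa using ih (ctShift lam a) (hcc a ha)

theorem mul_self_eq_zero_of_self_orthogonal {lam : R} (hlam : IsUnit (lam ^ 2 - 1))
    {C : Submodule R (Fin (n + 1) → R)} (hcc : ∀ a ∈ C, ctShift lam a ∈ C)
    (hso : C ≤ dualCode C) : ∀ a ∈ C, ∀ i, a i * a i = 0 := by
  refine forall_coord_of_forall_last (p := fun x => x * x = 0) hcc fun a ha => ?_
  have h := sum_ctShift_mul_ctShift lam a a
  rw [hso (hcc a ha) _ (hcc a ha), hso ha a ha, zero_add, eq_comm] at h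
  exact hlam.mul_right_eq_zero.mp h

end Constacyclic

theorem residue_of_unit_of_self_orthogonal_general
    {R : Type*} [CommRing R] [IsLocalRing R]
    (γ : R) (t : ℕ)
    (hmax : IsLocalRing.maximalIdeal R = Ideal.span {γ})
    (hnil : γ ^ t = 0) (hnil' : γ ^ (t - 1) ≠ 0)
    (lam : R)
    (n : ℕ) [NeZero n]
    (Ccode : Submodule R (Fin n → R))
    (hcc : ∀ a ∈ Ccode, ctShift lam a ∈ Ccode)
    (hso : Ccode ≤ dualCode Ccode)
    (hnontrivial : ¬ Ccode ≤ scalarCode n (γ ^ ((t + 1) / 2))) :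
    lam - 1 ∈ Ideal.span {γ} ∨ lam + 1 ∈ Ideal.span {γ} := by
  rw [← hmax]
  by_contra! h
  obtain ⟨m, rfl⟩ := Nat.exists_eq_succ_of_ne_zero (NeZero.ne n)
  have hsq := mul_self_eq_zero_of_self_orthogonal (isUnit_sq_sub_one_of_notMem h.1 h.2) hcc hso
  exact hnontrivial fun a ha => mem_scalarCode.mpr fun i =>
    pow_half_dvd_of_mul_self_eq_zero hmax hnil hnil' (hsq a ha i)

/-- A non-trivial self-orthogonal λ-constacyclic code over a finite chain ring forces
`λ ≡ ±1` modulo the maximal ideal. -/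
theorem residue_of_unit_of_self_orthogonal
    {R : Type*} [CommRing R] [Finite R] [IsLocalRing R]
    (γ : R) (t : ℕ)
    (hmax : IsLocalRing.maximalIdeal R = Ideal.span {γ})
    (hnil : γ ^ t = 0) (hnil' : γ ^ (t - 1) ≠ 0)
    (q : ℕ) (hq : q = Nat.card (IsLocalRing.ResidueField R))
    (lam : R) (hlam : IsUnit lam)
    (n : ℕ) [NeZero n] (hgcd : Nat.gcd n q = 1)
    (Ccode : Submodule R (Fin n → R))
    (hcc : ∀ a ∈ Ccode, ctShift lam a ∈ Ccode)
    (hso : Ccode ≤ dualCode Ccode)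
    (hnontrivial : ¬ Ccode ≤ scalarCode n (γ ^ ((t + 1) / 2))) :
    lam - 1 ∈ Ideal.span {γ} ∨ lam + 1 ∈ Ideal.span {γ} :=
  residue_of_unit_of_self_orthogonal_general γ t hmax hnil hnil' lam n Ccode hcc hso hnontrivial
end

section
/- Let R be a finite commutative chain ring with maximal ideal ⟨γ⟩, nilpotency index t, and residue field of cardinality q, and let n be a positive integer with gcd(n, q) = 1. Then for every λ ∈ 1 + γR there is a ring isomorphism R[X]/⟨X^n − 1⟩ ≅ R[X]/⟨X^n − λ⟩, and for every β ∈ −1 + γR there is a ring isomorphism R[X]/⟨X^n + 1⟩ ≅ R[X]/⟨X^n − β⟩. -/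
open Polynomial

/-!
Substituting `X ↦ α X` for a unit `α` carries `Xⁿ - c` to `αⁿ (Xⁿ - α⁻ⁿ c)`, so
`R[X]/⟨Xⁿ - c⟩ ≅ R[X]/⟨Xⁿ - d⟩` as soon as `αⁿ d = c`. It remains to find `α` with `αⁿ λ = 1`.
Since `q ∈ ⟨γ⟩`, the congruence `(1 + z)^q ≡ 1 + q z (mod z²)` shows that `λ^(q^j) - 1 ∈ ⟨γ⟩^(j+1)`,
so `λ^(q^t) = 1`; as `n` is prime to `q^t`, the unit `λ⁻¹` is then an `n`-th power.
-/

theorem Nat.cast_natCard_eq_zero (A : Type*) [AddGroupWithOne A] : (Nat.card A : A) = 0 := by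
  cases fintypeOrInfinite A
  · rw [Nat.card_eq_fintype_card, Nat.cast_card_eq_zero]
  · rw [Nat.card_eq_zero_of_infinite, Nat.cast_zero]

theorem exists_pow_eq_of_pow_eq_one_of_coprime {M : Type*} [Monoid M] {x : M} {n e : ℕ}
    (hx : x ^ e = 1) (h : n.Coprime e) : ∃ y, y ^ n = x := by
  obtain ⟨m, hm⟩ :=
    exists_pow_eq_self_of_coprime (h.coprime_dvd_right (orderOf_dvd_of_pow_eq_one hx))
  exact ⟨x ^ m, by rwa [← pow_mul, mul_comm, pow_mul]⟩

namespace Ideal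

variable {R : Type*} [CommRing R] {I : Ideal R} {q : ℕ}

theorem pow_pow_sub_one_mem_pow_succ (hq : (q : R) ∈ I) {x : R} (hx : x - 1 ∈ I) (j : ℕ) :
    x ^ q ^ j - 1 ∈ I ^ (j + 1) := by
  induction j with
  | zero => simpa using hx
  | succ j ih =>
    set z := x ^ q ^ j - 1
    have hsq : z ^ 2 ∈ I ^ (j + 2) :=
      pow_le_pow_right (show j + 2 ≤ (j + 1) * 2 by omega) (by rw [pow_mul]; exact pow_mem_pow ih 2)
    have hlin : z * q ∈ I ^ (j + 2) := by
      rw [pow_succ]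
      exact mul_mem_mul ih hq
    obtain ⟨s, hs⟩ := sq_dvd_add_pow_sub_sub z 1 q
    have hsplit : x ^ q ^ (j + 1) - 1 = z ^ 2 * s + z * q := by
      rw [pow_succ, pow_mul, show x ^ q ^ j = 1 + z by ring]
      linear_combination hs
    rw [hsplit]
    exact add_mem (mul_mem_right _ _ hsq) hlin

theorem exists_unit_pow_mul_eq_one {t n : ℕ} (hq : (q : R) ∈ I) (hI : I ^ t = ⊥)
    (hn : n.Coprime q) {u : R} (hu : u - 1 ∈ I) : ∃ α : Rˣ, α ^ n * u = 1 := by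
  have hunit : IsUnit u := by
    have hnil : IsNilpotent (u - 1) := ⟨t, by simpa [hI] using pow_mem_pow hu t⟩
    simpa using hnil.isUnit_add_one
  have hpow : hunit.unit⁻¹ ^ q ^ t = 1 := by
    have h := pow_le_pow_right t.le_succ (pow_pow_sub_one_mem_pow_succ hq hu t)
    rw [hI, mem_bot, sub_eq_zero] at h
    rw [inv_pow, inv_eq_one]
    exact Units.ext h
  obtain ⟨α, hα⟩ := exists_pow_eq_of_pow_eq_one_of_coprime hpow (hn.pow_right t)
  exact ⟨α, by rw [← Units.val_pow_eq_pow_val, hα, IsUnit.val_inv_mul]⟩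

end Ideal

namespace Polynomial

variable {R : Type*} [CommRing R]

noncomputable def scaleXAlgEquiv (α : Rˣ) : R[X] ≃ₐ[R] R[X] :=
  algEquivOfCompEqX (C (α : R) * X) (C (↑α⁻¹ : R) * X)
    (by simp [← C_mul, ← mul_assoc]) (by simp [← C_mul, ← mul_assoc])

theorem scaleXAlgEquiv_X_pow_sub_C (α : Rˣ) (n : ℕ) (d : R) :
    scaleXAlgEquiv α (X ^ n - C (α ^ n * d : R)) = C (α ^ n : R) * (X ^ n - C d) := by
  simp [scaleXAlgEquiv, mul_pow, mul_sub, C_mul]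

noncomputable def quotientXPowSubCEquiv (α : Rˣ) (n : ℕ) {c d : R} (h : α ^ n * d = c) :
    R[X] ⧸ Ideal.span {X ^ n - C c} ≃+* R[X] ⧸ Ideal.span {X ^ n - C d} :=
  Ideal.quotientEquiv _ _ (scaleXAlgEquiv α).toRingEquiv <| by
    rw [Ideal.map_span, Set.image_singleton, ← h, AlgEquiv.toRingEquiv_toRingHom, RingHom.coe_coe,
      scaleXAlgEquiv_X_pow_sub_C]
    exact (Ideal.span_singleton_mul_left_unit ((α.isUnit.pow n).map C) _).symm

end Polynomial

theorem quotient_ring_isomorphisms_general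
    {R : Type*} [CommRing R] [IsLocalRing R]
    (γ : R) (t : ℕ)
    (hmax : IsLocalRing.maximalIdeal R = Ideal.span {γ})
    (hnil : γ ^ t = 0)
    (q : ℕ) (hq : q = Nat.card (IsLocalRing.ResidueField R))
    (n : ℕ) (hgcd : Nat.gcd n q = 1) :
    (∀ lam : R, (∃ b : R, lam = 1 + γ * b) →
      Nonempty ((Polynomial R ⧸ Ideal.span {(X ^ n - 1 : Polynomial R)}) ≃+*
        (Polynomial R ⧸ Ideal.span {X ^ n - C lam}))) ∧
    (∀ beta : R, (∃ b : R, beta = -1 + γ * b) →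
      Nonempty ((Polynomial R ⧸ Ideal.span {(X ^ n + 1 : Polynomial R)}) ≃+*
        (Polynomial R ⧸ Ideal.span {X ^ n - C beta}))) := by
  have hq_mem : (q : R) ∈ Ideal.span {γ} := by
    rw [← hmax, ← IsLocalRing.residue_eq_zero_iff, map_natCast, hq, Nat.cast_natCard_eq_zero]
  have hI : Ideal.span {γ} ^ t = ⊥ := by
    rw [Ideal.span_singleton_pow, hnil, Ideal.span_singleton_eq_bot]
  have root (u b : R) (hu : u = 1 + γ * b) : ∃ α : Rˣ, α ^ n * u = 1 :=
    Ideal.exists_unit_pow_mul_eq_one hq_mem hI hgcd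
      (Ideal.mem_span_singleton'.2 ⟨b, by rw [hu]; ring⟩)
  refine ⟨fun lam ⟨b, hb⟩ => ?_, fun beta ⟨b, hb⟩ => ?_⟩
  · obtain ⟨α, hα⟩ := root lam b hb
    rw [← C_1]
    exact ⟨quotientXPowSubCEquiv α n hα⟩
  · obtain ⟨α, hα⟩ := root (-beta) (-b) (by rw [hb]; ring)
    rw [← sub_neg_eq_add, ← C_1, ← C_neg]
    exact ⟨quotientXPowSubCEquiv α n (by linear_combination -hα)⟩

/-- For `λ ∈ 1 + γR` there is a ring isomorphism `R[X]/⟨Xⁿ-1⟩ ≅ R[X]/⟨Xⁿ-λ⟩`, and for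
`β ∈ -1 + γR` there is a ring isomorphism `R[X]/⟨Xⁿ+1⟩ ≅ R[X]/⟨Xⁿ-β⟩`. -/
theorem quotient_ring_isomorphisms
    {R : Type*} [CommRing R] [Finite R] [IsLocalRing R]
    (γ : R) (t : ℕ)
    (hmax : IsLocalRing.maximalIdeal R = Ideal.span {γ})
    (hnil : γ ^ t = 0) (hnil' : γ ^ (t - 1) ≠ 0)
    (q : ℕ) (hq : q = Nat.card (IsLocalRing.ResidueField R))
    (n : ℕ) (hn : 0 < n) (hgcd : Nat.gcd n q = 1) :
    (∀ lam : R, (∃ b : R, lam = 1 + γ * b) →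
      Nonempty ((Polynomial R ⧸ Ideal.span {(X ^ n - 1 : Polynomial R)}) ≃+*
        (Polynomial R ⧸ Ideal.span {X ^ n - C lam}))) ∧
    (∀ beta : R, (∃ b : R, beta = -1 + γ * b) →
      Nonempty ((Polynomial R ⧸ Ideal.span {(X ^ n + 1 : Polynomial R)}) ≃+*
        (Polynomial R ⧸ Ideal.span {X ^ n - C beta}))) :=
  quotient_ring_isomorphisms_general γ t hmax hnil q hq n hgcd
end

section
/- Let R be a finite commutative chain ring with maximal ideal ⟨γ⟩, nilpotency index t, and residue field of cardinality q, and let n be a positive integer with gcd(n, q) = 1. If there exists a non-trivial self-dual cyclic code of length n over R (i.e., a cyclic code C with C = C⊥ and C not of the form γ^s·R^n for any integer s), then t is even. -/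
open Polynomial

/-!
The coordinate sum `σ(a) = ∑ aᵢ` (evaluation at `x = 1`) satisfies `σ(a) σ(b) = 0` on a
self-orthogonal cyclic code, since `σ(a) σ(b)` is the sum of the inner products of `a` with the
rotations of `b`. In a chain ring a square-zero element is killed by `γ ^ ⌊t/2⌋`, so the constant
word `γ ^ ⌊t/2⌋ (1, …, 1)` is orthogonal to `C`, hence lies in `C = C⊥`. Its coordinate sum
`n γ ^ ⌊t/2⌋` then squares to zero; as `n` is a unit, `γ ^ (2 ⌊t/2⌋) = 0`, i.e. `t ≤ 2 ⌊t/2⌋`.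
-/

lemma le_of_pow_eq_zero {M : Type*} [MonoidWithZero M] {γ : M} {t m : ℕ}
    (hnil' : γ ^ (t - 1) ≠ 0) (hm : γ ^ m = 0) : t ≤ m := by
  by_contra! h
  exact hnil' (pow_eq_zero_of_le (by omega) hm)

section ChainRing

open IsLocalRing

variable {R : Type*} [CommRing R] [IsLocalRing R] {γ : R} {t : ℕ}

lemma exists_eq_unit_mul_pow (hmax : maximalIdeal R = Ideal.span {γ}) (hnil : γ ^ t = 0)
    (x : R) : ∃ (u : R) (i : ℕ), IsUnit u ∧ x = u * γ ^ i := by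
  classical
  rcases eq_or_ne x 0 with rfl | hx
  · exact ⟨1, t, isUnit_one, by rw [hnil, mul_zero]⟩
  have hbound : ∃ m, ¬ γ ^ m ∣ x := ⟨t, by rwa [hnil, zero_dvd_iff]⟩
  obtain ⟨i, hi⟩ : ∃ i, Nat.find hbound = i + 1 :=
    Nat.exists_eq_succ_of_ne_zero fun h => by simpa [h] using Nat.find_spec hbound
  obtain ⟨u, rfl⟩ : γ ^ i ∣ x := not_not.mp (Nat.find_min hbound (by omega))
  refine ⟨u, i, ?_, mul_comm _ _⟩
  by_contra hu
  obtain ⟨v, rfl⟩ := Ideal.mem_span_singleton'.mp (hmax ▸ hu : u ∈ Ideal.span {γ})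
  exact hi ▸ Nat.find_spec hbound <| ⟨v, by ring⟩

/-- A square-zero element lies in `γ ^ ⌈t / 2⌉ R`. -/
lemma pow_half_mul_eq_zero_of_mul_self_eq_zero (hmax : maximalIdeal R = Ideal.span {γ})
    (hnil : γ ^ t = 0) (hnil' : γ ^ (t - 1) ≠ 0) {x : R} (hx : x * x = 0) :
    γ ^ (t / 2) * x = 0 := by
  obtain ⟨u, i, hu, rfl⟩ := exists_eq_unit_mul_pow hmax hnil x
  have h2i : γ ^ (i + i) = 0 :=
    (hu.mul hu).mul_right_eq_zero.mp (by rw [← hx, pow_add]; ring)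
  have hti := le_of_pow_eq_zero hnil' h2i
  rw [mul_left_comm, ← pow_add, pow_eq_zero_of_le (by omega) hnil, mul_zero]

end ChainRing

lemma natCast_ne_zero_of_coprime_card {A : Type*} [Ring A] [Nontrivial A] {n : ℕ}
    (hn : n.Coprime (Nat.card A)) : (n : A) ≠ 0 := by
  intro h
  have hcard : (Nat.card A : A) = 0 := by
    cases finite_or_infinite A
    · have := Fintype.ofFinite A
      rw [Nat.card_eq_fintype_card, Nat.cast_card_eq_zero]
    · rw [Nat.card_eq_zero_of_infinite, Nat.cast_zero]
  have hone := Nat.dvd_one.mp (hn ▸ Nat.dvd_gcd (ringChar.dvd h) (ringChar.dvd hcard))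
  exact CharP.ringChar_ne_one hone

lemma IsLocalRing.isUnit_natCast_of_coprime_card_residueField {R : Type*} [CommRing R]
    [IsLocalRing R] {n : ℕ} (hn : n.Coprime (Nat.card (IsLocalRing.ResidueField R))) :
    IsUnit (n : R) :=
  (residue_ne_zero_iff_isUnit _).mp <| by
    rw [map_natCast]; exact natCast_ne_zero_of_coprime_card hn

section CyclicCode

variable {R : Type*} [CommRing R] {n : ℕ} [NeZero n]

open Fin.NatCast

lemma ctShift_one (a : Fin n → R) : ctShift 1 a = fun i => a (i - 1) := by
  funext i
  simp only [ctShift, one_mul, ite_self]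

lemma comp_sub_mem_of_ctShift_mem {C : Submodule R (Fin n → R)}
    (hC : ∀ a ∈ C, ctShift 1 a ∈ C) {b : Fin n → R} (hb : b ∈ C) (c : Fin n) :
    (fun i => b (i - c)) ∈ C := by
  rw [← Fin.cast_val_eq_self c]
  induction (c : ℕ) with
  | zero => simpa using hb
  | succ m ih => simpa [ctShift_one, sub_sub, add_comm] using hC _ ih

omit [NeZero n] in
lemma Fintype.sum_mul_sum_eq_sum_sum_sub {G : Type*} [Fintype G] [AddCommGroup G]
    (a b : G → R) : (∑ i, a i) * (∑ j, b j) = ∑ c, ∑ i, a i * b (i - c) := by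
  calc (∑ i, a i) * (∑ j, b j) = ∑ i, ∑ c, a i * b (i - c) := by
        rw [Fintype.sum_mul_sum]
        exact Finset.sum_congr rfl fun i _ =>
          (Equiv.sum_comp (Equiv.subLeft i) fun j => a i * b j).symm
    _ = ∑ c, ∑ i, a i * b (i - c) := Finset.sum_comm

lemma sum_mul_sum_eq_zero_of_le_dualCode {C : Submodule R (Fin n → R)}
    (hC : ∀ a ∈ C, ctShift 1 a ∈ C) (hdual : C ≤ dualCode C)
    {a b : Fin n → R} (ha : a ∈ C) (hb : b ∈ C) : (∑ i, a i) * (∑ i, b i) = 0 := by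
  rw [Fintype.sum_mul_sum_eq_sum_sum_sub]
  exact Finset.sum_eq_zero fun c _ => hdual ha _ (comp_sub_mem_of_ctShift_mem hC hb c)

end CyclicCode

theorem even_nilpotency_of_nontrivial_selfdual_cyclic_general
    {R : Type*} [CommRing R] [IsLocalRing R]
    (γ : R) (t : ℕ)
    (hmax : IsLocalRing.maximalIdeal R = Ideal.span {γ})
    (hnil : γ ^ t = 0) (hnil' : γ ^ (t - 1) ≠ 0)
    (q : ℕ) (hq : q = Nat.card (IsLocalRing.ResidueField R))
    (n : ℕ) [NeZero n] (hgcd : Nat.gcd n q = 1)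
    (hex : ∃ Ccode : Submodule R (Fin n → R),
      (∀ a ∈ Ccode, ctShift (1 : R) a ∈ Ccode) ∧ Ccode = dualCode Ccode ∧
      ∀ s : ℕ, Ccode ≠ scalarCode n (γ ^ s)) :
    Even t := by
  obtain ⟨C, hshift, hdual, -⟩ := hex
  have hsq : ∀ a ∈ C, ∀ b ∈ C, (∑ i, a i) * (∑ i, b i) = 0 := fun a ha b hb =>
    sum_mul_sum_eq_zero_of_le_dualCode hshift hdual.le ha hb
  set v : Fin n → R := fun _ => γ ^ (t / 2)
  have hv : v ∈ C := hdual ▸ fun b hb => by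
    rw [← Finset.mul_sum]
    exact pow_half_mul_eq_zero_of_mul_self_eq_zero hmax hnil hnil' (hsq b hb b hb)
  have hn : IsUnit (n : R) :=
    IsLocalRing.isUnit_natCast_of_coprime_card_residueField (hq ▸ hgcd)
  have hpow : γ ^ (t / 2 + t / 2) = 0 := by
    have h := hsq v hv v hv
    simp only [v, Finset.sum_const, Finset.card_univ, Fintype.card_fin, nsmul_eq_mul] at h
    exact (hn.mul hn).mul_right_eq_zero.mp (by rw [← h, pow_add]; ring)
  have := le_of_pow_eq_zero hnil' hpow
  exact Nat.even_iff.mpr (by omega)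

/-- If a non-trivial self-dual cyclic code of length `n` exists over a finite chain ring,
then the nilpotency index `t` is even. -/
theorem even_nilpotency_of_nontrivial_selfdual_cyclic
    {R : Type*} [CommRing R] [Finite R] [IsLocalRing R]
    (γ : R) (t : ℕ)
    (hmax : IsLocalRing.maximalIdeal R = Ideal.span {γ})
    (hnil : γ ^ t = 0) (hnil' : γ ^ (t - 1) ≠ 0)
    (q : ℕ) (hq : q = Nat.card (IsLocalRing.ResidueField R))
    (n : ℕ) [NeZero n] (hgcd : Nat.gcd n q = 1)
    (hex : ∃ Ccode : Submodule R (Fin n → R),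
      (∀ a ∈ Ccode, ctShift (1 : R) a ∈ Ccode) ∧ Ccode = dualCode Ccode ∧
      ∀ s : ℕ, Ccode ≠ scalarCode n (γ ^ s)) :
    Even t :=
  even_nilpotency_of_nontrivial_selfdual_cyclic_general γ t hmax hnil hnil' q hq n hgcd hex
end
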